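/- arXiv:1603.07437 — 7 statements merged into one kernel-verified Lean document; each statement's English description precedes it below -/
import Mathlib

section
/- Let (g, ρ, V, 𝒱, B₀) be a pentad admitting a Φ-map Φ_ρ, where B₀ is a non-degenerate invariant bilinear form on g. Then Φ_ρ is a homomorphism of g-modules; that is, Φ_ρ(ρ(a)v ⊗ φ) + Φ_ρ(v ⊗ ϱ(a)φ) = [a, Φ_ρ(v ⊗ φ)] for all a ∈ g, v ∈ V, φ ∈ 𝒱. -/
open TensorProduct

/-- Let `(g, ρ, V, 𝒱, B₀)` be a pentad admitting a Φ-map `Φρ`, where `B₀` is a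
non-degenerate invariant bilinear form on `g`.  Then `Φρ` is a homomorphism of `g`-modules:
`Φρ (ρ a v ⊗ φ) + Φρ (v ⊗ ϱ a φ) = ⁅a, Φρ (v ⊗ φ)⁆` for all `a ∈ g`, `v ∈ V`, `φ ∈ 𝒱`,
where `ϱ` is the canonical action of `g` on `𝒱 ⊆ Hom(V, k)`, `(ϱ a φ) v = -φ (ρ a v)`. -/
theorem statement1
    {k g V : Type*} [Field k] [LieRing g] [LieAlgebra k g]
    [AddCommGroup V] [Module k V]
    (B₀ : g →ₗ[k] g →ₗ[k] k)
    (hB₀inv : ∀ a b c : g, B₀ ⁅a, b⁆ c = B₀ a ⁅b, c⁆)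
    (hB₀left : ∀ a : g, (∀ b : g, B₀ a b = 0) → a = 0)
    (hB₀right : ∀ b : g, (∀ a : g, B₀ a b = 0) → b = 0)
    (ρ : g →ₗ[k] V →ₗ[k] V)
    (hρ : ∀ a b : g, ρ ⁅a, b⁆ = ρ a ∘ₗ ρ b - ρ b ∘ₗ ρ a)
    (𝒱 : Submodule k (V →ₗ[k] k))
    (h𝒱 : ∀ (a : g), ∀ φ ∈ 𝒱, -(φ ∘ₗ ρ a) ∈ 𝒱)
    (Φρ : V ⊗[k] 𝒱 →ₗ[k] g)
    (hΦρ : ∀ (a : g) (v : V) (φ : 𝒱),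
      B₀ a (Φρ (v ⊗ₜ[k] φ)) = (φ : V →ₗ[k] k) (ρ a v)) :
    ∀ (a : g) (v : V) (φ : 𝒱),
      Φρ (ρ a v ⊗ₜ[k] φ)
        + Φρ (v ⊗ₜ[k] (⟨-((φ : V →ₗ[k] k) ∘ₗ ρ a), h𝒱 a φ φ.2⟩ : 𝒱))
        = ⁅a, Φρ (v ⊗ₜ[k] φ)⁆ := by
  intro a v φ
  apply eq_of_sub_eq_zero
  apply hB₀right
  intro b
  have h1 := hΦρ b (ρ a v) φ
  have h2 := hΦρ b v (⟨-((φ : V →ₗ[k] k) ∘ₗ ρ a), h𝒱 a φ φ.2⟩ : 𝒱)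
  have h3 : B₀ b ⁅a, Φρ (v ⊗ₜ[k] φ)⁆ = B₀ ⁅b, a⁆ (Φρ (v ⊗ₜ[k] φ)) :=
    (hB₀inv b a _).symm
  have h4 := hΦρ ⁅b, a⁆ v φ
  simp only [map_sub, map_add, h1, h2, h3, h4, hρ b a]
  simp [sub_eq_zero]
end

section
/- Let (g, ρ, V, 𝒱, B₀) be a standard pentad such that the maps ρ : g ⊗ V → V and ϱ : g ⊗ 𝒱 → 𝒱 are surjective. Then the map Φ° : V → Hom(𝒱, g) sending v to the map φ ↦ Φ_ρ(v ⊗ φ) is injective, and the analogous map Ψ° : 𝒱 → Hom(V, g) sending φ to the map v ↦ -Φ_ρ(v ⊗ φ) is injective. -/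
open TensorProduct

/-- Let `(g, ρ, V, 𝒱, B₀)` be a standard pentad such that the action maps
`ρ : g ⊗ V → V` and `ϱ : g ⊗ 𝒱 → 𝒱` are surjective.  Then the map `Φ° : V → Hom(𝒱, g)`,
`v ↦ (φ ↦ Φρ (v ⊗ φ))`, is injective, and the map `Ψ° : 𝒱 → Hom(V, g)`,
`φ ↦ (v ↦ -Φρ (v ⊗ φ))`, is injective. -/
theorem statement2
    {k g V : Type*} [Field k] [LieRing g] [LieAlgebra k g]
    [AddCommGroup V] [Module k V]
    (B₀ : g →ₗ[k] g →ₗ[k] k)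
    (hB₀inv : ∀ a b c : g, B₀ ⁅a, b⁆ c = B₀ a ⁅b, c⁆)
    (hB₀left : ∀ a : g, (∀ b : g, B₀ a b = 0) → a = 0)
    (hB₀right : ∀ b : g, (∀ a : g, B₀ a b = 0) → b = 0)
    (ρ : g →ₗ[k] V →ₗ[k] V)
    (hρ : ∀ a b : g, ρ ⁅a, b⁆ = ρ a ∘ₗ ρ b - ρ b ∘ₗ ρ a)
    (𝒱 : Submodule k (V →ₗ[k] k))
    (h𝒱 : ∀ (a : g), ∀ φ ∈ 𝒱, -(φ ∘ₗ ρ a) ∈ 𝒱)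
    -- the canonical pairing between `V` and `𝒱` is non-degenerate
    (hpairV : ∀ v : V, (∀ φ : 𝒱, (φ : V →ₗ[k] k) v = 0) → v = 0)
    (hpair𝒱 : ∀ φ : 𝒱, (∀ v : V, (φ : V →ₗ[k] k) v = 0) → φ = 0)
    -- a Φ-map exists
    (Φρ : V ⊗[k] 𝒱 →ₗ[k] g)
    (hΦρ : ∀ (a : g) (v : V) (φ : 𝒱),
      B₀ a (Φρ (v ⊗ₜ[k] φ)) = (φ : V →ₗ[k] k) (ρ a v))
    -- `ρ : g ⊗ V → V` is surjective
    (hρsurj : ∀ v : V, v ∈ Submodule.span k {w : V | ∃ (a : g) (u : V), w = ρ a u})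
    -- `ϱ : g ⊗ 𝒱 → 𝒱` is surjective
    (hϱsurj : ∀ φ : 𝒱, φ ∈ Submodule.span k
      {ψ : 𝒱 | ∃ (a : g) (χ : 𝒱), (ψ : V →ₗ[k] k) = -((χ : V →ₗ[k] k) ∘ₗ ρ a)}) :
    (∀ v : V, (∀ φ : 𝒱, Φρ (v ⊗ₜ[k] φ) = 0) → v = 0) ∧
    (∀ φ : 𝒱, (∀ v : V, Φρ (v ⊗ₜ[k] φ) = 0) → φ = 0) := by
  constructor
  · intro v hv
    have key : ∀ (a : g) (χ : 𝒱), (χ : V →ₗ[k] k) (ρ a v) = 0 := by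
      intro a χ
      have := hΦρ a v χ
      rw [hv χ] at this
      simpa using this.symm
    apply hpairV
    intro φ
    refine Submodule.span_induction ?_ ?_ ?_ ?_ (hϱsurj φ)
    · rintro ψ ⟨a, χ, hψ⟩
      have h2 : (ψ : V →ₗ[k] k) v = 0 := by
        rw [hψ]
        simp [LinearMap.comp_apply, key a χ]
      exact h2
    · simp
    · intro x y _ _ hx hy
      simp [hx, hy]
    · intro c x _ hx
      simp [hx]
  · intro φ hφ
    have key : ∀ (a : g) (u : V), (φ : V →ₗ[k] k) (ρ a u) = 0 := by
      intro a u
      have := hΦρ a u φ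
      rw [hφ u] at this
      simpa using this.symm
    apply hpair𝒱
    intro v
    refine Submodule.span_induction ?_ ?_ ?_ ?_ (hρsurj v)
    · rintro w ⟨a, u, rfl⟩
      exact key a u
    · simp
    · intro x y _ _ hx hy
      simp [hx, hy]
    · intro c x _ hx
      simp [hx]
end

section
/- Let 𝔤 = sl₂(ℂ) with Killing form K, ℒ(𝔤) = ℂ[t,t⁻¹] ⊗ 𝔤 the loop algebra, and K_ℒ the bilinear form on ℒ(𝔤) given by K_ℒ(tⁿ⊗X, tᵐ⊗Y) = δ_{n+m,0} K(X,Y). Let Y₀ ∈ sl₂ be the lower triangular matrix unit and define φ ∈ Hom(ℒ(𝔤), ℂ) by φ(tⁿ⊗X) = K(Y₀, X) for all n. Then there is no element Z ∈ ℒ(𝔤) such that K_ℒ(tⁿ⊗H₀, Z) = φ([tⁿ⊗H₀, 1⊗X₀]) for all n ∈ ℤ, where H₀ = diag(1,-1) and X₀ is the upper triangular matrix unit. Consequently the pentad (ℒ(𝔤), ad, ℒ(𝔤), Hom(ℒ(𝔤),ℂ), K_ℒ) admits no Φ-map. -/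
/-!
Pairing `tⁿ ⊗ H₀` against a fixed `Z` picks out the Killing form of `H₀` with the coefficient of
`t⁻ⁿ` in `Z`, so it vanishes for all but finitely many `n`.  On the other side,
`φ ⁅tⁿ ⊗ H₀, 1 ⊗ X₀⁆ = 2 K(Y₀, X₀) = 8` for every `n`.  A Φ-map would produce such a `Z`, namely
`Φ ((1 ⊗ X₀) ⊗ φ)`.
-/

open TensorProduct LaurentPolynomial

section LoopPairing

variable {R L : Type*} [CommRing R] [LieRing L] [LieAlgebra R L]

open LieAlgebra LoopAlgebra

theorem loopPairing_tmul_apply (Kℒ : LinearMap.BilinForm R (loopAlgebra R ℤ L))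
    (B : LinearMap.BilinForm R L)
    (hK : ∀ (n m : ℤ) (X Y : L), Kℒ (T n ⊗ₜ X) (T m ⊗ₜ Y) = if n + m = 0 then B X Y else 0)
    (n : ℤ) (X : L) (Z : loopAlgebra R ℤ L) :
    Kℒ (T n ⊗ₜ X) Z = B X (toFinsupp R ℤ L Z (-n)) := by
  suffices Kℒ (T n ⊗ₜ X) ∘ₗ (toFinsupp R ℤ L).symm.toLinearMap
      = B X ∘ₗ Finsupp.lapply (-n) by
    simpa using LinearMap.congr_fun this (toFinsupp R ℤ L Z)
  refine Finsupp.lhom_ext fun m Y ↦ ?_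
  simp only [LinearMap.comp_apply, LinearEquiv.coe_coe, toFinsupp_symm_single,
    Finsupp.lapply_apply]
  rw [← T, hK, Finsupp.single_apply, apply_ite (B X), map_zero]
  exact if_congr (by omega) rfl rfl

theorem eventually_loopPairing_tmul_eq_zero (Kℒ : LinearMap.BilinForm R (loopAlgebra R ℤ L))
    (B : LinearMap.BilinForm R L)
    (hK : ∀ (n m : ℤ) (X Y : L), Kℒ (T n ⊗ₜ X) (T m ⊗ₜ Y) = if n + m = 0 then B X Y else 0)
    (X : L) (Z : loopAlgebra R ℤ L) :
    ∀ᶠ n in Filter.cofinite, Kℒ (T n ⊗ₜ X) Z = 0 := by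
  refine Filter.eventually_cofinite.mpr <|
    ((toFinsupp R ℤ L Z).support.finite_toSet.preimage neg_injective.injOn).subset fun n hn ↦ ?_
  replace hn : B X (toFinsupp R ℤ L Z (-n)) ≠ 0 := by rwa [← loopPairing_tmul_apply Kℒ B hK]
  exact Finsupp.mem_support_iff.mpr fun h ↦ hn (by rw [h, map_zero])

end LoopPairing

theorem LinearMap.trace_eq_sum_of_apply_basis_eq_smul {R M ι : Type*} [CommRing R]
    [AddCommGroup M] [Module R M] [Fintype ι] (b : Module.Basis ι R M)
    (f : M →ₗ[R] M) (c : ι → R) (hf : ∀ i, f (b i) = c i • b i) :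
    LinearMap.trace R M f = ∑ i, c i := by
  classical
  have : LinearMap.toMatrix b b f = Matrix.diagonal c := by
    ext i j
    rw [LinearMap.toMatrix_apply, hf, map_smul, b.repr_self, Matrix.diagonal_apply]
    by_cases h : i = j <;> simp [h]
  rw [LinearMap.trace_eq_matrix_trace R b, this, Matrix.trace_diagonal]

namespace LieAlgebra.SpecialLinear

variable (R : Type*) [CommRing R]

theorem mem_sl_fin_two_iff (A : Matrix (Fin 2) (Fin 2) R) :
    A ∈ sl (Fin 2) R ↔ A 0 0 + A 1 1 = 0 := by
  change A ∈ LinearMap.ker (Matrix.traceLinearMap (Fin 2) R R) ↔ _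
  rw [LinearMap.mem_ker, Matrix.traceLinearMap_apply, Matrix.trace_fin_two]

/-- Coordinates with respect to `e = E₀₁`, `h = E₀₀ - E₁₁`, `f = E₁₀`. -/
def slFinTwoEquiv : sl (Fin 2) R ≃ₗ[R] (Fin 3 → R) where
  toFun A := ![A.val 0 1, A.val 0 0, A.val 1 0]
  map_add' A B := by ext i; fin_cases i <;> simp
  map_smul' c A := by ext i; fin_cases i <;> simp
  invFun c := ⟨!![c 1, c 0; c 2, -c 1], by simp [mem_sl_fin_two_iff]⟩
  left_inv A := by
    have hA := (mem_sl_fin_two_iff R A.val).mp A.2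
    ext i j
    fin_cases i <;> fin_cases j <;> simp [eq_neg_of_add_eq_zero_right hA]
  right_inv c := by ext i; fin_cases i <;> simp

noncomputable def slFinTwoBasis : Module.Basis (Fin 3) R (sl (Fin 2) R) :=
  .ofEquivFun (slFinTwoEquiv R)

theorem val_slFinTwoBasis (i : Fin 3) :
    (slFinTwoBasis R i).val = ![!![0, 1; 0, 0], !![1, 0; 0, -1], !![0, 0; 1, 0]] i := by
  fin_cases i <;> ext j k <;> fin_cases j <;> fin_cases k <;>
    simp [slFinTwoBasis, slFinTwoEquiv]

variable {R}

theorem lie_eq_two_smul_of_val_eq (H X : sl (Fin 2) R)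
    (hH : (H : Matrix (Fin 2) (Fin 2) R) = !![1, 0; 0, -1])
    (hX : (X : Matrix (Fin 2) (Fin 2) R) = !![0, 1; 0, 0]) :
    ⁅H, X⁆ = (2 : R) • X := by
  ext : 1
  rw [sl_bracket, SetLike.val_smul, hH, hX]
  ext i j
  fin_cases i <;> fin_cases j <;> norm_num

/-- In the basis `(e, h, f)`, `ad f ∘ ad e` is diagonal with entries `0, 2, 2`. -/
theorem killingForm_eq_four_of_val_eq (X Y : sl (Fin 2) R)
    (hX : (X : Matrix (Fin 2) (Fin 2) R) = !![0, 1; 0, 0])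
    (hY : (Y : Matrix (Fin 2) (Fin 2) R) = !![0, 0; 1, 0]) :
    killingForm R (sl (Fin 2) R) Y X = 4 := by
  rw [killingForm, LieModule.traceForm_apply_apply,
    LinearMap.trace_eq_sum_of_apply_basis_eq_smul (slFinTwoBasis R) _ ![0, 2, 2]]
  · rw [Fin.sum_univ_three]
    norm_num [Matrix.cons_val_two]
  · intro i
    ext : 1
    rw [LinearMap.comp_apply, LieModule.toEnd_apply_apply, LieModule.toEnd_apply_apply, sl_bracket,
      sl_bracket, SetLike.val_smul, hX, hY, val_slFinTwoBasis]
    fin_cases i <;> ext j k <;> fin_cases j <;> fin_cases k <;> norm_num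

end LieAlgebra.SpecialLinear

/-- Let `𝔤 = sl₂(ℂ)` with Killing form `K`, `ℒ(𝔤) = ℂ[t,t⁻¹] ⊗ 𝔤` the loop
algebra, and `K_ℒ` the bilinear form with `K_ℒ (tⁿ⊗X) (tᵐ⊗Y) = δ_{n+m,0} K X Y`.  Let
`H₀ = diag(1,-1)`, `X₀` the upper and `Y₀` the lower triangular matrix unit in `sl₂`, and let
`φ ∈ Hom(ℒ(𝔤), ℂ)` satisfy `φ (tⁿ⊗X) = K Y₀ X` for all `n`.  Then no `Z ∈ ℒ(𝔤)` satisfies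
`K_ℒ (tⁿ⊗H₀) Z = φ ⁅tⁿ⊗H₀, 1⊗X₀⁆` for all `n ∈ ℤ`; consequently the pentad
`(ℒ(𝔤), ad, ℒ(𝔤), Hom(ℒ(𝔤),ℂ), K_ℒ)` admits no Φ-map. -/
theorem statement4
    (Kℒ : (LaurentPolynomial ℂ) ⊗[ℂ] ↥(LieAlgebra.SpecialLinear.sl (Fin 2) ℂ) →ₗ[ℂ]
          (LaurentPolynomial ℂ) ⊗[ℂ] ↥(LieAlgebra.SpecialLinear.sl (Fin 2) ℂ) →ₗ[ℂ] ℂ)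
    (hKℒ : ∀ (n m : ℤ) (X Y : ↥(LieAlgebra.SpecialLinear.sl (Fin 2) ℂ)),
      Kℒ (T n ⊗ₜ[ℂ] X) (T m ⊗ₜ[ℂ] Y)
        = if n + m = 0 then killingForm ℂ ↥(LieAlgebra.SpecialLinear.sl (Fin 2) ℂ) X Y else 0)
    (H₀ X₀ Y₀ : ↥(LieAlgebra.SpecialLinear.sl (Fin 2) ℂ))
    (hH₀ : (H₀ : Matrix (Fin 2) (Fin 2) ℂ) = !![1, 0; 0, -1])
    (hX₀ : (X₀ : Matrix (Fin 2) (Fin 2) ℂ) = !![0, 1; 0, 0])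
    (hY₀ : (Y₀ : Matrix (Fin 2) (Fin 2) ℂ) = !![0, 0; 1, 0])
    (φ : (LaurentPolynomial ℂ) ⊗[ℂ] ↥(LieAlgebra.SpecialLinear.sl (Fin 2) ℂ) →ₗ[ℂ] ℂ)
    (hφ : ∀ (n : ℤ) (X : ↥(LieAlgebra.SpecialLinear.sl (Fin 2) ℂ)),
      φ (T n ⊗ₜ[ℂ] X) = killingForm ℂ ↥(LieAlgebra.SpecialLinear.sl (Fin 2) ℂ) Y₀ X) :
    (¬ ∃ Z : (LaurentPolynomial ℂ) ⊗[ℂ] ↥(LieAlgebra.SpecialLinear.sl (Fin 2) ℂ),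
        ∀ n : ℤ, Kℒ (T n ⊗ₜ[ℂ] H₀) Z
          = φ ⁅(T n ⊗ₜ[ℂ] H₀ : (LaurentPolynomial ℂ) ⊗[ℂ] ↥(LieAlgebra.SpecialLinear.sl (Fin 2) ℂ)),
              ((1 : LaurentPolynomial ℂ) ⊗ₜ[ℂ] X₀)⁆)
    ∧ (¬ ∃ Φ : ((LaurentPolynomial ℂ) ⊗[ℂ] ↥(LieAlgebra.SpecialLinear.sl (Fin 2) ℂ)) ⊗[ℂ]
            (((LaurentPolynomial ℂ) ⊗[ℂ] ↥(LieAlgebra.SpecialLinear.sl (Fin 2) ℂ)) →ₗ[ℂ] ℂ)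
            →ₗ[ℂ] (LaurentPolynomial ℂ) ⊗[ℂ] ↥(LieAlgebra.SpecialLinear.sl (Fin 2) ℂ),
        ∀ (a v : (LaurentPolynomial ℂ) ⊗[ℂ] ↥(LieAlgebra.SpecialLinear.sl (Fin 2) ℂ))
          (ψ : ((LaurentPolynomial ℂ) ⊗[ℂ] ↥(LieAlgebra.SpecialLinear.sl (Fin 2) ℂ)) →ₗ[ℂ] ℂ),
          Kℒ a (Φ (v ⊗ₜ[ℂ] ψ)) = ψ ⁅a, v⁆) := by
  have hφ_bracket (n : ℤ) :
      φ ⁅(T n : LaurentPolynomial ℂ) ⊗ₜ[ℂ] H₀, (1 : LaurentPolynomial ℂ) ⊗ₜ[ℂ] X₀⁆ = 8 := by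
    rw [LieAlgebra.ExtendScalars.bracket_tmul, mul_one,
      LieAlgebra.SpecialLinear.lie_eq_two_smul_of_val_eq H₀ X₀ hH₀ hX₀, tmul_smul, map_smul, hφ,
      LieAlgebra.SpecialLinear.killingForm_eq_four_of_val_eq X₀ Y₀ hX₀ hY₀]
    norm_num
  have no_Z : ¬ ∃ Z, ∀ n : ℤ, Kℒ (T n ⊗ₜ[ℂ] H₀) Z
      = φ ⁅(T n : LaurentPolynomial ℂ) ⊗ₜ[ℂ] H₀, (1 : LaurentPolynomial ℂ) ⊗ₜ[ℂ] X₀⁆ := by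
    rintro ⟨Z, hZ⟩
    obtain ⟨n, hn⟩ := (eventually_loopPairing_tmul_eq_zero Kℒ _ hKℒ H₀ Z).exists
    rw [hZ, hφ_bracket] at hn
    norm_num at hn
  exact ⟨no_Z, fun ⟨Φ, hΦ⟩ ↦ no_Z ⟨Φ (((1 : LaurentPolynomial ℂ) ⊗ₜ[ℂ] X₀) ⊗ₜ[ℂ] φ),
    fun n ↦ hΦ _ _ φ⟩⟩
end

section
/- Let (g, ρ, V, 𝒱, B₀) be a standard pentad such that both ρ : g ⊗ V → V and the induced action ϱ : g ⊗ 𝒱 → 𝒱 are faithful and surjective. Then the associated graded Lie algebra L(g, ρ, V, 𝒱, B₀) = ⊕_{n∈ℤ} V_n is transitive: for x ∈ V_i with i ≥ 0, [x, V_{-1}] = 0 implies x = 0, and for x ∈ V_i with i ≤ 0, [x, V₁] = 0 implies x = 0. -/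
/-- A **standard pentad** `(g, ρ, V, 𝒱, B₀)` in the abstract-dual formulation: a Lie algebra
`g` with a non-degenerate invariant bilinear form `B`, representations `ρ` on `V` and `ϱ`
on `W` (with `W` playing the role of the `g`-submodule `𝒱 ⊆ Hom(V, k)`, realized via the
non-degenerate pairing `pair`, so that `ϱ` is the canonical dual action), together with a
Φ-map `Φ`. -/
structure PentadStruct (k g V W : Type*) [Field k] [LieRing g] [LieAlgebra k g]
    [AddCommGroup V] [Module k V] [AddCommGroup W] [Module k W] where
  ρ : g →ₗ[k] V →ₗ[k] V
  rep_ρ : ∀ a b : g, ρ ⁅a, b⁆ = ρ a ∘ₗ ρ b - ρ b ∘ₗ ρ a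
  ϱ : g →ₗ[k] W →ₗ[k] W
  rep_ϱ : ∀ a b : g, ϱ ⁅a, b⁆ = ϱ a ∘ₗ ϱ b - ϱ b ∘ₗ ϱ a
  pair : V →ₗ[k] W →ₗ[k] k
  pair_compat : ∀ (a : g) (v : V) (w : W), pair (ρ a v) w = - pair v (ϱ a w)
  pair_nondeg_left : ∀ v : V, (∀ w : W, pair v w = 0) → v = 0
  pair_nondeg_right : ∀ w : W, (∀ v : V, pair v w = 0) → w = 0
  B : g →ₗ[k] g →ₗ[k] k
  B_nondeg_left : ∀ a : g, (∀ b : g, B a b = 0) → a = 0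
  B_nondeg_right : ∀ b : g, (∀ a : g, B a b = 0) → b = 0
  B_invariant : ∀ a b c : g, B ⁅a, b⁆ c = B a ⁅b, c⁆
  Φ : V →ₗ[k] W →ₗ[k] g
  Φ_compat : ∀ (a : g) (v : V) (w : W), B a (Φ v w) = pair (ρ a v) w

/-- The graded Lie algebra `L(g, ρ, V, 𝒱, B₀) = ⊕ₙ Vₙ` associated with a standard pentad,
characterized by its defining properties: it is ℤ-graded, its degrees `0`, `1`, `-1` are the
images of `g`, `V`, `𝒱` (compatibly with the Lie structures and the Φ-map), the higher graded
pieces satisfy `V_{i+1} = [V₁, V_i]`, `V_{-i-1} = [V₋₁, V₋ᵢ]` for `i ≥ 1`, and elements of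
`Vₙ`, `|n| ≥ 2`, are by construction (as homomorphisms) determined by their brackets with
`V_{∓1}`. -/
structure AssocGradedLieAlgebra (k g V W : Type*) [Field k] [LieRing g] [LieAlgebra k g]
    [AddCommGroup V] [Module k V] [AddCommGroup W] [Module k W]
    (P : PentadStruct k g V W) (L : Type*) [LieRing L] [LieAlgebra k L] where
  grading : ℤ → Submodule k L
  isInternal : DirectSum.IsInternal grading
  lie_mem : ∀ (n m : ℤ), ∀ x ∈ grading n, ∀ y ∈ grading m, ⁅x, y⁆ ∈ grading (n + m)
  ιg : g →ₗ[k] L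
  ιV : V →ₗ[k] L
  ιW : W →ₗ[k] L
  ιg_inj : Function.Injective ιg
  ιV_inj : Function.Injective ιV
  ιW_inj : Function.Injective ιW
  ιg_range : LinearMap.range ιg = grading 0
  ιV_range : LinearMap.range ιV = grading 1
  ιW_range : LinearMap.range ιW = grading (-1)
  ιg_lie : ∀ a b : g, ιg ⁅a, b⁆ = ⁅ιg a, ιg b⁆
  lie_ιV : ∀ (a : g) (v : V), ⁅ιg a, ιV v⁆ = ιV (P.ρ a v)
  lie_ιW : ∀ (a : g) (w : W), ⁅ιg a, ιW w⁆ = ιW (P.ϱ a w)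
  lie_Φ : ∀ (v : V) (w : W), ⁅ιV v, ιW w⁆ = ιg (P.Φ v w)
  span_pos : ∀ i : ℤ, 1 ≤ i → grading (i + 1)
    = Submodule.span k {z : L | ∃ x ∈ grading 1, ∃ y ∈ grading i, z = ⁅x, y⁆}
  span_neg : ∀ i : ℤ, 1 ≤ i → grading (-i - 1)
    = Submodule.span k {z : L | ∃ x ∈ grading (-1), ∃ y ∈ grading (-i), z = ⁅x, y⁆}
  trans_pos : ∀ n : ℤ, 2 ≤ n → ∀ x ∈ grading n, (∀ y ∈ grading (-1), ⁅x, y⁆ = 0) → x = 0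
  trans_neg : ∀ n : ℤ, 2 ≤ n → ∀ x ∈ grading (-n), (∀ y ∈ grading 1, ⁅x, y⁆ = 0) → x = 0

/-- Let `(g, ρ, V, 𝒱, B₀)` be a standard pentad such that both
`ρ : g ⊗ V → V` and the induced action `ϱ : g ⊗ 𝒱 → 𝒱` are faithful and surjective.  Then
the associated graded Lie algebra `L(g, ρ, V, 𝒱, B₀) = ⊕ₙ Vₙ` is transitive: for `x ∈ Vᵢ`
with `i ≥ 0`, `[x, V₋₁] = 0` implies `x = 0`, and for `x ∈ Vᵢ` with `i ≤ 0`, `[x, V₁] = 0`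
implies `x = 0`. -/
theorem statement7
    {k g V W L : Type*} [Field k] [LieRing g] [LieAlgebra k g]
    [AddCommGroup V] [Module k V] [AddCommGroup W] [Module k W]
    [LieRing L] [LieAlgebra k L]
    (P : PentadStruct k g V W)
    (A : AssocGradedLieAlgebra k g V W P L)
    (hρ_faithful : ∀ a : g, P.ρ a = 0 → a = 0)
    (hϱ_faithful : ∀ a : g, P.ϱ a = 0 → a = 0)
    (hρ_surj : ∀ v : V, v ∈ Submodule.span k {u : V | ∃ (a : g) (v' : V), u = P.ρ a v'})
    (hϱ_surj : ∀ w : W, w ∈ Submodule.span k {u : W | ∃ (a : g) (w' : W), u = P.ϱ a w'}) :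
    (∀ i : ℤ, 0 ≤ i → ∀ x ∈ A.grading i, (∀ y ∈ A.grading (-1), ⁅x, y⁆ = 0) → x = 0) ∧
    (∀ i : ℤ, i ≤ 0 → ∀ x ∈ A.grading i, (∀ y ∈ A.grading 1, ⁅x, y⁆ = 0) → x = 0) := by
  -- Key fact: if `Φ v w = 0` then `pair (ρ a v) w = 0` for all `a`.
  have hΦ : ∀ (v : V) (w : W), P.Φ v w = 0 → ∀ a : g, P.pair (P.ρ a v) w = 0 := by
    intro v w h a
    rw [← P.Φ_compat, h, map_zero]
  constructor
  · intro i hi x hx hbr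
    rcases lt_or_ge i 2 with h2 | h2
    · interval_cases i
      · -- i = 0 : x = ιg a
        rw [← A.ιg_range] at hx
        obtain ⟨a, rfl⟩ := hx
        have ha : ∀ w : W, P.ϱ a w = 0 := by
          intro w
          apply A.ιW_inj
          rw [map_zero, ← A.lie_ιW]
          exact hbr (A.ιW w) (A.ιW_range ▸ ⟨w, rfl⟩)
        rw [hϱ_faithful a (LinearMap.ext fun w => by simp [ha w]), map_zero]
      · -- i = 1 : x = ιV v
        rw [← A.ιV_range] at hx
        obtain ⟨v, rfl⟩ := hx
        have hΦ0 : ∀ w : W, P.Φ v w = 0 := by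
          intro w
          apply A.ιg_inj
          rw [map_zero, ← A.lie_Φ]
          exact hbr (A.ιW w) (A.ιW_range ▸ ⟨w, rfl⟩)
        have hρv : ∀ a : g, P.ρ a v = 0 := by
          intro a
          exact P.pair_nondeg_left _ (fun w => hΦ (v) w (hΦ0 w) a)
        have hv : v = 0 := by
          apply P.pair_nondeg_left
          intro w
          have : w ∈ LinearMap.ker (P.pair v) := by
            refine Submodule.span_le.mpr ?_ (hϱ_surj w)
            rintro u ⟨a, w', rfl⟩
            simp only [SetLike.mem_coe, LinearMap.mem_ker]
            have h := (P.pair_compat a v w').symm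
            rw [hρv a] at h
            simpa using h
          simpa using this
        rw [hv, map_zero]
    · exact A.trans_pos i h2 x hx hbr
  · intro i hi x hx hbr
    rcases lt_or_ge (-2 : ℤ) i with h2 | h2
    · interval_cases i
      · -- i = -1 : x = ιW w
        rw [← A.ιW_range] at hx
        obtain ⟨w, rfl⟩ := hx
        have hΦ0 : ∀ v : V, P.Φ v w = 0 := by
          intro v
          apply A.ιg_inj
          rw [map_zero, ← A.lie_Φ, ← neg_neg (⁅A.ιV v, A.ιW w⁆)]
          rw [← lie_skew]
          rw [hbr (A.ιV v) (A.ιV_range ▸ ⟨v, rfl⟩)]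
          simp
        have hw : w = 0 := by
          apply P.pair_nondeg_right
          intro v
          have : v ∈ LinearMap.ker (P.pair.flip w) := by
            refine Submodule.span_le.mpr ?_ (hρ_surj v)
            rintro u ⟨a, v', rfl⟩
            simp only [SetLike.mem_coe, LinearMap.mem_ker, LinearMap.flip_apply]
            exact hΦ v' w (hΦ0 v') a
          simpa using this
        rw [hw, map_zero]
      · -- i = 0 : x = ιg a
        rw [← A.ιg_range] at hx
        obtain ⟨a, rfl⟩ := hx
        have ha : ∀ v : V, P.ρ a v = 0 := by
          intro v
          apply A.ιV_inj
          rw [map_zero, ← A.lie_ιV]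
          exact hbr (A.ιV v) (A.ιV_range ▸ ⟨v, rfl⟩)
        rw [hρ_faithful a (LinearMap.ext fun v => by simp [ha v]), map_zero]
    · have := A.trans_neg (-i) (by omega) x (by simpa using hx) hbr
      exact this
end

section
/- Let (g, ρ, V, 𝒱, B₀) be a standard pentad with B₀ symmetric. Then there exists a non-degenerate symmetric invariant bilinear form B_L on the associated graded Lie algebra L(g,ρ,V,𝒱,B₀) = ⊕_{n∈ℤ} V_n such that B_L restricted to V₀ × V₀ equals B₀, B_L(v, φ) = φ(v) for v ∈ V₁ = V and φ ∈ V_{-1} = 𝒱, and B_L(V_n, V_m) = 0 whenever n + m ≠ 0. -/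
/-!
Write `Vₙ` for `A.grading n`. The form is assembled from pairings `Θₙ` of `Vₙ` with `V₋ₙ`
(`n ≥ 0`), built recursively: `Θ₀ = B₀`, `Θ₁` is the canonical pairing, and for `v ∈ V₁`,
`u ∈ Vₙ₊₁` one sets `Θₙ₊₂([v, u], y) = -Θₙ₊₁(u, [v, y])`. The right-hand side is a functional
of `v ⊗ u`, and it only depends on `[v, u]`: `V₋ₙ₋₂` is spanned by brackets `[φ, y]` with
`φ ∈ V₋₁`, and on those the Jacobi identity turns it into `-Θₙ₊₁([φ, [v, u]], y)`. Along the
recursion each `Θₙ` is `ad V₀`-skew and consecutive pairings are intertwined by `ad V₁` and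
`ad V₋₁`. Hence `ad y` is skew for `B_L` for `y` in `V₋₁`, `V₀`, `V₁`; as the `y` with `ad y`
skew form a Lie subalgebra and these three pieces generate `L`, `B_L` is invariant.
Non-degeneracy is proved degree by degree: in degrees `0, ±1` it is that of `B₀` and of the
pairing; in higher degrees, the brackets with `V_{∓1}` of an element orthogonal to everything
are again orthogonal to everything, hence zero by induction, so the element is zero.
-/

theorem LinearMap.apply_rightInverse_apply_of_ker_le {R M N Q : Type*} [Ring R]
    [AddCommGroup M] [Module R M] [AddCommGroup N] [Module R N] [AddCommGroup Q] [Module R Q]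
    {f : M →ₗ[R] N} {s : N →ₗ[R] M} (hs : f ∘ₗ s = LinearMap.id) {h : M →ₗ[R] Q}
    (hker : LinearMap.ker f ≤ LinearMap.ker h) (m : M) : h (s (f m)) = h m := by
  rw [← sub_eq_zero, ← map_sub]
  apply hker
  rw [LinearMap.mem_ker, map_sub, ← LinearMap.comp_apply f s, hs, LinearMap.id_apply, sub_self]

namespace AssocGradedLieAlgebra

open DirectSum TensorProduct

variable {k g V W L : Type*} [Field k] [LieRing g] [LieAlgebra k g]
  [AddCommGroup V] [Module k V] [AddCommGroup W] [Module k W]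
  [LieRing L] [LieAlgebra k L] {P : PentadStruct k g V W}
  (A : AssocGradedLieAlgebra k g V W P L)

noncomputable instance decomposition : Decomposition A.grading :=
  A.isInternal.chooseDecomposition

noncomputable def component (n : ℤ) : L →ₗ[k] A.grading n :=
  (DirectSum.component k ℤ (fun i => A.grading i) n) ∘ₗ (decomposeLinearEquiv A.grading).toLinearMap

noncomputable def proj (n : ℤ) : L →ₗ[k] L := (A.grading n).subtype ∘ₗ A.component n

lemma proj_mem (n : ℤ) (x : L) : A.proj n x ∈ A.grading n := (A.component n x).2

lemma proj_of_mem {n : ℤ} {x : L} (hx : x ∈ A.grading n) : A.proj n x = x :=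
  decompose_of_mem_same _ hx

lemma proj_of_mem_of_ne {m n : ℤ} {x : L} (hx : x ∈ A.grading m) (h : m ≠ n) :
    A.proj n x = 0 :=
  decompose_of_mem_ne _ hx h

@[simp] lemma proj_proj (n : ℤ) (x : L) : A.proj n (A.proj n x) = A.proj n x :=
  A.proj_of_mem (A.proj_mem n x)

lemma component_proj (n : ℤ) (x : L) : A.component n (A.proj n x) = A.component n x :=
  Subtype.ext (A.proj_proj n x)

lemma eq_zero_of_forall_proj_eq_zero {x : L} (h : ∀ n, A.proj n x = 0) : x = 0 := by
  rw [← (decompose A.grading).symm_apply_apply x]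
  have : decompose A.grading x = 0 := DFinsupp.ext fun n => Subtype.ext (h n)
  rw [this, decompose_symm_zero]

@[elab_as_elim]
lemma induction_on_homogeneous {motive : L → Prop} (zero : motive 0)
    (mem : ∀ n, ∀ x ∈ A.grading n, motive x)
    (add : ∀ x y, motive x → motive y → motive (x + y)) (x : L) : motive x :=
  Decomposition.inductionOn A.grading zero (fun y => mem _ _ y.2) add x

lemma lie_mem_of_add_eq {m n d : ℤ} (h : m + n = d) {x y : L} (hx : x ∈ A.grading m)
    (hy : y ∈ A.grading n) : ⁅x, y⁆ ∈ A.grading d :=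
  h ▸ A.lie_mem m n x hx y hy

lemma proj_lie {d i j : ℤ} (h : d + i = j) {c : L} (hc : c ∈ A.grading d) (z : L) :
    A.proj j ⁅c, z⁆ = ⁅c, A.proj i z⁆ := by
  induction z using A.induction_on_homogeneous with
  | zero => simp
  | add x y hx hy => simp only [lie_add, map_add, hx, hy]
  | mem m x hx =>
    by_cases hm : m = i
    · subst hm; rw [A.proj_of_mem (h ▸ A.lie_mem d m c hc x hx), A.proj_of_mem hx]
    · rw [A.proj_of_mem_of_ne (A.lie_mem d m c hc x hx) (by omega), A.proj_of_mem_of_ne hx hm,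
        lie_zero]

section coord

variable {M : Type*} [AddCommGroup M] [Module k M] {ι : M →ₗ[k] L} (hι : Function.Injective ι)
  {n : ℤ} (hrange : LinearMap.range ι = A.grading n)

noncomputable def coord : L →ₗ[k] M :=
  (LinearEquiv.ofInjective ι hι).symm.toLinearMap ∘ₗ
    (A.proj n).codRestrict (LinearMap.range ι) (fun x => hrange ▸ A.proj_mem n x)

lemma apply_coord (x : L) : ι (A.coord hι hrange x) = A.proj n x :=
  congrArg Subtype.val ((LinearEquiv.ofInjective ι hι).apply_symm_apply _)

@[simp] lemma coord_apply (m : M) : A.coord hι hrange (ι m) = m :=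
  hι (by rw [apply_coord, A.proj_of_mem (hrange ▸ LinearMap.mem_range_self ι m)])

@[simp] lemma coord_proj (x : L) : A.coord hι hrange (A.proj n x) = A.coord hι hrange x :=
  hι (by rw [apply_coord, apply_coord, proj_proj])

end coord

noncomputable def coordG : L →ₗ[k] g := A.coord A.ιg_inj A.ιg_range
noncomputable def coordV : L →ₗ[k] V := A.coord A.ιV_inj A.ιV_range
noncomputable def coordW : L →ₗ[k] W := A.coord A.ιW_inj A.ιW_range

lemma ιg_coordG (x : L) : A.ιg (A.coordG x) = A.proj 0 x := A.apply_coord _ _ x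
lemma ιV_coordV (x : L) : A.ιV (A.coordV x) = A.proj 1 x := A.apply_coord _ _ x
lemma ιW_coordW (x : L) : A.ιW (A.coordW x) = A.proj (-1) x := A.apply_coord _ _ x

@[simp] lemma coordG_ιg (a : g) : A.coordG (A.ιg a) = a := A.coord_apply _ _ a
@[simp] lemma coordV_ιV (v : V) : A.coordV (A.ιV v) = v := A.coord_apply _ _ v
@[simp] lemma coordW_ιW (w : W) : A.coordW (A.ιW w) = w := A.coord_apply _ _ w

lemma ιg_mem (a : g) : A.ιg a ∈ A.grading 0 := A.ιg_range ▸ LinearMap.mem_range_self _ a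
lemma ιV_mem (v : V) : A.ιV v ∈ A.grading 1 := A.ιV_range ▸ LinearMap.mem_range_self _ v
lemma ιW_mem (w : W) : A.ιW w ∈ A.grading (-1) := A.ιW_range ▸ LinearMap.mem_range_self _ w

lemma coordG_lie_ιg (a : g) (x : L) : A.coordG ⁅A.ιg a, x⁆ = ⁅a, A.coordG x⁆ := A.ιg_inj <| by
  rw [ιg_coordG, A.proj_lie (zero_add _) (A.ιg_mem a), A.ιg_lie, ιg_coordG]

lemma coordV_lie_ιg (a : g) (x : L) : A.coordV ⁅A.ιg a, x⁆ = P.ρ a (A.coordV x) := A.ιV_inj <| by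
  rw [ιV_coordV, A.proj_lie (zero_add _) (A.ιg_mem a), ← A.lie_ιV, ιV_coordV]

lemma coordW_lie_ιg (a : g) (x : L) : A.coordW ⁅A.ιg a, x⁆ = P.ϱ a (A.coordW x) := A.ιW_inj <| by
  rw [ιW_coordW, A.proj_lie (zero_add _) (A.ιg_mem a), ← A.lie_ιW, ιW_coordW]

lemma coordG_lie_ιV (v : V) (x : L) : A.coordG ⁅A.ιV v, x⁆ = P.Φ v (A.coordW x) := A.ιg_inj <| by
  rw [ιg_coordG, A.proj_lie (i := -1) (by norm_num) (A.ιV_mem v), ← A.lie_Φ, ιW_coordW]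

lemma coordV_lie_ιV (v : V) (x : L) : A.coordV ⁅A.ιV v, x⁆ = -P.ρ (A.coordG x) v := A.ιV_inj <| by
  rw [ιV_coordV, A.proj_lie (add_zero _) (A.ιV_mem v), map_neg, ← A.lie_ιV, ιg_coordG, ← lie_skew]

lemma coordG_lie_ιW (w : W) (x : L) : A.coordG ⁅A.ιW w, x⁆ = -P.Φ (A.coordV x) w := A.ιg_inj <| by
  rw [ιg_coordG, A.proj_lie (i := 1) (by norm_num) (A.ιW_mem w), map_neg, ← A.lie_Φ,
    ιV_coordV, ← lie_skew]

lemma coordW_lie_ιW (w : W) (x : L) : A.coordW ⁅A.ιW w, x⁆ = -P.ϱ (A.coordG x) w := A.ιW_inj <| by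
  rw [ιW_coordW, A.proj_lie (add_zero _) (A.ιW_mem w), map_neg, ← A.lie_ιW, ιg_coordG, ← lie_skew]

lemma induction_on_lie_pos {m n : ℤ} (hm : 1 ≤ m) (hmn : m + 1 = n) {motive : L → Prop}
    (zero : motive 0) (add : ∀ x y, motive x → motive y → motive (x + y))
    (smul : ∀ (a : k) x, motive x → motive (a • x))
    (lie : ∀ v ∈ A.grading 1, ∀ u ∈ A.grading m, motive ⁅v, u⁆)
    {x : L} (hx : x ∈ A.grading n) : motive x := by
  rw [← hmn, A.span_pos m hm] at hx
  induction hx using Submodule.span_induction with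
  | mem x hx => obtain ⟨v, hv, u, hu, rfl⟩ := hx; exact lie v hv u hu
  | zero => exact zero
  | add x y _ _ hx hy => exact add x y hx hy
  | smul a x _ hx => exact smul a x hx

lemma induction_on_lie_neg {m n : ℤ} (hm : 1 ≤ m) (hmn : -m - 1 = n) {motive : L → Prop}
    (zero : motive 0) (add : ∀ x y, motive x → motive y → motive (x + y))
    (smul : ∀ (a : k) x, motive x → motive (a • x))
    (lie : ∀ φ ∈ A.grading (-1), ∀ u ∈ A.grading (-m), motive ⁅φ, u⁆)
    {x : L} (hx : x ∈ A.grading n) : motive x := by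
  rw [← hmn, A.span_neg m hm] at hx
  induction hx using Submodule.span_induction with
  | mem x hx => obtain ⟨φ, hφ, u, hu, rfl⟩ := hx; exact lie φ hφ u hu
  | zero => exact zero
  | add x y _ _ hx hy => exact add x y hx hy
  | smul a x _ hx => exact smul a x hx

lemma lieSubalgebra_eq_top {K : LieSubalgebra k L} (hdeg0 : ∀ x ∈ A.grading 0, x ∈ K)
    (hdeg1 : ∀ x ∈ A.grading 1, x ∈ K) (hdegNeg1 : ∀ x ∈ A.grading (-1), x ∈ K) : K = ⊤ := by
  have hpos_neg : ∀ i : ℕ,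
      (∀ x ∈ A.grading (i + 1), x ∈ K) ∧ ∀ x ∈ A.grading (-(i + 1)), x ∈ K := by
    intro i
    induction i with
    | zero => simpa using ⟨hdeg1, hdegNeg1⟩
    | succ i ih =>
      constructor
      · exact fun x => A.induction_on_lie_pos (m := i + 1) (by omega) (by push_cast; ring)
          K.zero_mem (fun _ _ => K.add_mem) (fun a _ => K.smul_mem a)
          (fun v hv u hu => K.lie_mem (hdeg1 v hv) (ih.1 u hu))
      · exact fun x => A.induction_on_lie_neg (m := i + 1) (by omega) (by push_cast; ring)
          K.zero_mem (fun _ _ => K.add_mem) (fun a _ => K.smul_mem a)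
          (fun φ hφ u hu => K.lie_mem (hdegNeg1 φ hφ) (ih.2 u hu))
  rw [eq_top_iff]
  rintro x -
  induction x using A.induction_on_homogeneous with
  | zero => exact K.zero_mem
  | add x y hx hy => exact K.add_mem hx hy
  | mem n x hx =>
    obtain ⟨i, rfl | rfl⟩ := Int.eq_nat_or_neg n
    · cases i with
      | zero => exact hdeg0 x hx
      | succ i => exact (hpos_neg i).1 x (by exact_mod_cast hx)
    · cases i with
      | zero => exact hdeg0 x (by simpa using hx)
      | succ i => exact (hpos_neg i).2 x (by exact_mod_cast hx)

structure IsDegreePairing (n : ℤ) (Θ : L →ₗ[k] L →ₗ[k] k) : Prop where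
  proj_left : ∀ x y, Θ (A.proj n x) y = Θ x y
  proj_right : ∀ x y, Θ x (A.proj (-n) y) = Θ x y
  skew_deg0 : ∀ c ∈ A.grading 0, ∀ x y, Θ ⁅c, x⁆ y = -Θ x ⁅c, y⁆

structure LiftsPairing (Θ Θ' : L →ₗ[k] L →ₗ[k] k) : Prop where
  lift_deg1 : ∀ v ∈ A.grading 1, ∀ x y, Θ' ⁅v, x⁆ y = -Θ x ⁅v, y⁆
  lift_degNeg1 : ∀ φ ∈ A.grading (-1), ∀ x y, Θ' x ⁅φ, y⁆ = -Θ ⁅φ, x⁆ y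

noncomputable def pairing0 : L →ₗ[k] L →ₗ[k] k := (P.B ∘ₗ A.coordG).compl₂ A.coordG

noncomputable def pairing1 : L →ₗ[k] L →ₗ[k] k := (P.pair ∘ₗ A.coordV).compl₂ A.coordW

lemma pairing0_apply (x y : L) : A.pairing0 x y = P.B (A.coordG x) (A.coordG y) := rfl

lemma pairing1_apply (x y : L) : A.pairing1 x y = P.pair (A.coordV x) (A.coordW y) := rfl

lemma isDegreePairing_pairing0 : A.IsDegreePairing 0 A.pairing0 where
  proj_left x y := by simp [pairing0_apply, coordG]
  proj_right x y := by simp [pairing0_apply, coordG]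
  skew_deg0 c hc x y := by
    obtain ⟨a, rfl⟩ : c ∈ LinearMap.range A.ιg := A.ιg_range ▸ hc
    rw [pairing0_apply, pairing0_apply, coordG_lie_ιg, coordG_lie_ιg, ← lie_skew, map_neg,
      LinearMap.neg_apply, P.B_invariant]

lemma isDegreePairing_pairing1 : A.IsDegreePairing 1 A.pairing1 where
  proj_left x y := by simp [pairing1_apply, coordV]
  proj_right x y := by simp [pairing1_apply, coordW]
  skew_deg0 c hc x y := by
    obtain ⟨a, rfl⟩ : c ∈ LinearMap.range A.ιg := A.ιg_range ▸ hc
    rw [pairing1_apply, pairing1_apply, coordV_lie_ιg, coordW_lie_ιg, P.pair_compat]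

lemma liftsPairing_pairing0_pairing1 (hB : ∀ a b : g, P.B a b = P.B b a) :
    A.LiftsPairing A.pairing0 A.pairing1 where
  lift_deg1 v hv x y := by
    obtain ⟨v, rfl⟩ : v ∈ LinearMap.range A.ιV := A.ιV_range ▸ hv
    rw [pairing1_apply, pairing0_apply, coordV_lie_ιV, coordG_lie_ιV, P.Φ_compat, map_neg,
      LinearMap.neg_apply]
  lift_degNeg1 φ hφ x y := by
    obtain ⟨w, rfl⟩ : φ ∈ LinearMap.range A.ιW := A.ιW_range ▸ hφ
    rw [pairing1_apply, pairing0_apply, coordW_lie_ιW, coordG_lie_ιW, map_neg, ← P.pair_compat,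
      map_neg, LinearMap.neg_apply, neg_neg, hB, P.Φ_compat]

section extension

variable (n : ℕ)

noncomputable def lieTensor : A.grading 1 ⊗[k] A.grading (n + 1) →ₗ[k] A.grading (n + 2) :=
  LinearMap.codRestrict _ (TensorProduct.lift
      (((LieAlgebra.ad k L : L →ₗ[k] Module.End k L) ∘ₗ (A.grading 1).subtype).compl₂
        (A.grading (n + 1)).subtype)) fun t => by
    induction t using TensorProduct.induction_on with
    | zero => simp
    | tmul v u => exact A.lie_mem_of_add_eq (by ring) v.2 u.2
    | add t t' ht ht' => rw [map_add]; exact add_mem ht ht'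

@[simp] lemma lieTensor_tmul (v : A.grading 1) (u : A.grading (n + 1)) :
    (A.lieTensor n (v ⊗ₜ u) : L) = ⁅(v : L), (u : L)⁆ := rfl

lemma lieTensor_surjective : Function.Surjective (A.lieTensor n) := by
  rintro ⟨x, hx⟩
  obtain ⟨t, ht⟩ : x ∈ LinearMap.range ((A.grading _).subtype ∘ₗ A.lieTensor n) :=
    A.induction_on_lie_pos (m := n + 1) (by omega) (by ring) (zero_mem _)
      (fun _ _ => add_mem) (fun a _ => Submodule.smul_mem _ a)
      (fun v hv u hu => LinearMap.mem_range.2 ⟨⟨v, hv⟩ ⊗ₜ ⟨u, hu⟩, rfl⟩) hx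
  exact ⟨t, Subtype.ext ht⟩

-- Any linear section will do: `tensorForm_lieSection_lieTensor` makes the choice irrelevant.
noncomputable def lieSection : A.grading (n + 2) →ₗ[k] A.grading 1 ⊗[k] A.grading (n + 1) :=
  ((A.lieTensor n).exists_rightInverse_of_surjective
    (LinearMap.range_eq_top.2 (A.lieTensor_surjective n))).choose

lemma lieTensor_comp_lieSection : A.lieTensor n ∘ₗ A.lieSection n = LinearMap.id :=
  ((A.lieTensor n).exists_rightInverse_of_surjective
    (LinearMap.range_eq_top.2 (A.lieTensor_surjective n))).choose_spec

noncomputable def tensorForm (Θ : L →ₗ[k] L →ₗ[k] k) :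
    A.grading 1 ⊗[k] A.grading (n + 1) →ₗ[k] L →ₗ[k] k :=
  TensorProduct.lift ((LinearMap.llcomp k L L k ∘ₗ Θ ∘ₗ (A.grading (n + 1)).subtype).flip ∘ₗ
    (LieAlgebra.ad k L : L →ₗ[k] Module.End k L) ∘ₗ (A.grading 1).subtype)

@[simp] lemma tensorForm_tmul (Θ : L →ₗ[k] L →ₗ[k] k) (v : A.grading 1) (u : A.grading (n + 1))
    (y : L) : A.tensorForm n Θ (v ⊗ₜ u) y = Θ u ⁅(v : L), y⁆ := rfl

noncomputable def extendPairing (Θ : L →ₗ[k] L →ₗ[k] k) : L →ₗ[k] L →ₗ[k] k :=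
  -(A.tensorForm n Θ ∘ₗ A.lieSection n ∘ₗ A.component (n + 2))

variable {A n} {Θ₀ Θ : L →ₗ[k] L →ₗ[k] k}

lemma tensorForm_proj_right (hΘ : A.IsDegreePairing (n + 1) Θ)
    (t : A.grading 1 ⊗[k] A.grading (n + 1)) (y : L) :
    A.tensorForm n Θ t (A.proj (-(n + 2)) y) = A.tensorForm n Θ t y := by
  induction t using TensorProduct.induction_on with
  | zero => simp
  | tmul v u =>
    rw [tensorForm_tmul, tensorForm_tmul, ← hΘ.proj_right _ ⁅_, y⁆,
      A.proj_lie (i := -(n + 2)) (by ring) v.2]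
  | add t t' ht ht' => simp only [map_add, LinearMap.add_apply, ht, ht']

lemma tensorForm_lie_degNeg1 (hΘ : A.IsDegreePairing (n + 1) Θ) (hstep : A.LiftsPairing Θ₀ Θ)
    {φ : L} (hφ : φ ∈ A.grading (-1)) (t : A.grading 1 ⊗[k] A.grading (n + 1)) (y : L) :
    A.tensorForm n Θ t ⁅φ, y⁆ = Θ ⁅φ, (A.lieTensor n t : L)⁆ y := by
  induction t using TensorProduct.induction_on with
  | zero => simp
  | tmul v u =>
    obtain ⟨v, hv⟩ := v
    obtain ⟨u, hu⟩ := u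
    have hc : ⁅v, φ⁆ ∈ A.grading 0 := A.lie_mem_of_add_eq (by ring) hv hφ
    calc Θ u ⁅v, ⁅φ, y⁆⁆ = Θ u ⁅⁅v, φ⁆, y⁆ + Θ u ⁅φ, ⁅v, y⁆⁆ := by rw [leibniz_lie, map_add]
      _ = -Θ ⁅⁅v, φ⁆, u⁆ y + Θ ⁅v, ⁅φ, u⁆⁆ y := by
        rw [hΘ.skew_deg0 _ hc, neg_neg, hstep.lift_degNeg1 φ hφ, hstep.lift_deg1 v hv]
      _ = Θ ⁅φ, ⁅v, u⁆⁆ y := by rw [leibniz_lie v φ u, map_add, LinearMap.add_apply]; ring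
  | add t t' ht ht' => simp only [map_add, LinearMap.add_apply, ht, ht', Submodule.coe_add, lie_add]

lemma tensorForm_eq_zero (hΘ : A.IsDegreePairing (n + 1) Θ) (hstep : A.LiftsPairing Θ₀ Θ)
    {t : A.grading 1 ⊗[k] A.grading (n + 1)} (ht : A.lieTensor n t = 0) :
    A.tensorForm n Θ t = 0 := by
  ext y
  induction y using A.induction_on_homogeneous with
  | zero => simp
  | add y y' hy hy' => simp only [map_add, hy, hy', LinearMap.zero_apply, add_zero]
  | mem m y hy =>
    by_cases hm : m = -(n + 2)
    · refine A.induction_on_lie_neg (m := n + 1) (by omega) (by omega)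
        (motive := fun y => A.tensorForm n Θ t y = 0) (by simp) (fun _ _ h h' => by simp [h, h'])
        (fun a _ h => by simp [h]) (fun φ hφ y _ => ?_) hy
      rw [tensorForm_lie_degNeg1 hΘ hstep hφ, ht, ZeroMemClass.coe_zero, lie_zero, map_zero,
        LinearMap.zero_apply]
    · rw [← tensorForm_proj_right hΘ, A.proj_of_mem_of_ne hy hm, map_zero, LinearMap.zero_apply]

lemma tensorForm_lieSection_lieTensor (hΘ : A.IsDegreePairing (n + 1) Θ)
    (hstep : A.LiftsPairing Θ₀ Θ) (t : A.grading 1 ⊗[k] A.grading (n + 1)) :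
    A.tensorForm n Θ (A.lieSection n (A.lieTensor n t)) = A.tensorForm n Θ t :=
  LinearMap.apply_rightInverse_apply_of_ker_le (A.lieTensor_comp_lieSection n)
    (fun _ ht => tensorForm_eq_zero hΘ hstep ht) t

lemma extendPairing_apply (x y : L) : A.extendPairing n Θ x y =
    -A.tensorForm n Θ (A.lieSection n (A.component (n + 2) x)) y := rfl

lemma extendPairing_proj_left (x y : L) :
    A.extendPairing n Θ (A.proj (n + 2) x) y = A.extendPairing n Θ x y := by
  rw [extendPairing_apply, extendPairing_apply, component_proj]

lemma extendPairing_proj_right (hΘ : A.IsDegreePairing (n + 1) Θ) (x y : L) :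
    A.extendPairing n Θ x (A.proj (-(n + 2)) y) = A.extendPairing n Θ x y := by
  rw [extendPairing_apply, extendPairing_apply, tensorForm_proj_right hΘ]

lemma extendPairing_lie_deg1 (hΘ : A.IsDegreePairing (n + 1) Θ) (hstep : A.LiftsPairing Θ₀ Θ)
    {v : L} (hv : v ∈ A.grading 1) (x y : L) :
    A.extendPairing n Θ ⁅v, x⁆ y = -Θ x ⁅v, y⁆ := by
  have hcomp : A.component (n + 2) ⁅v, x⁆ = A.lieTensor n (⟨v, hv⟩ ⊗ₜ A.component (n + 1) x) :=
    Subtype.ext (A.proj_lie (by ring) hv x)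
  rw [extendPairing_apply, hcomp, tensorForm_lieSection_lieTensor hΘ hstep, tensorForm_tmul]
  exact congrArg Neg.neg (hΘ.proj_left x _)

lemma extendPairing_lie_degNeg1 (hΘ : A.IsDegreePairing (n + 1) Θ)
    (hstep : A.LiftsPairing Θ₀ Θ) {φ : L} (hφ : φ ∈ A.grading (-1)) (x y : L) :
    A.extendPairing n Θ x ⁅φ, y⁆ = -Θ ⁅φ, x⁆ y := by
  rw [extendPairing_apply, tensorForm_lie_degNeg1 hΘ hstep hφ,
    ← LinearMap.comp_apply (A.lieTensor n), lieTensor_comp_lieSection, LinearMap.id_apply,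
    ← hΘ.proj_left ⁅φ, x⁆, A.proj_lie (i := n + 2) (by ring) hφ]
  rfl

lemma extendPairing_skew_deg0 (hΘ : A.IsDegreePairing (n + 1) Θ) (hstep : A.LiftsPairing Θ₀ Θ)
    {c : L} (hc : c ∈ A.grading 0) (x y : L) :
    A.extendPairing n Θ ⁅c, x⁆ y = -A.extendPairing n Θ x ⁅c, y⁆ := by
  have key : ∀ x ∈ A.grading (n + 2), ∀ y,
      A.extendPairing n Θ ⁅c, x⁆ y = -A.extendPairing n Θ x ⁅c, y⁆ := by
    refine fun x hx => A.induction_on_lie_pos (m := n + 1) (by omega) (by ring)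
      (motive := fun x => ∀ y, A.extendPairing n Θ ⁅c, x⁆ y = -A.extendPairing n Θ x ⁅c, y⁆)
      (by simp)
      (fun _ _ h h' y => by simp only [lie_add, map_add, LinearMap.add_apply, h, h', neg_add])
      (fun a _ h y => by simp [h])
      (fun v hv u hu y => ?_) hx
    have hcv : ⁅c, v⁆ ∈ A.grading 1 := A.lie_mem_of_add_eq (zero_add 1) hc hv
    rw [leibniz_lie, map_add, LinearMap.add_apply, extendPairing_lie_deg1 hΘ hstep hcv,
      extendPairing_lie_deg1 hΘ hstep hv, extendPairing_lie_deg1 hΘ hstep hv, hΘ.skew_deg0 c hc,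
      leibniz_lie c v y, map_add]
    ring
  rw [← extendPairing_proj_left, A.proj_lie (zero_add _) hc, key _ (A.proj_mem _ x),
    extendPairing_proj_left]

lemma isDegreePairing_extendPairing (hΘ : A.IsDegreePairing (n + 1) Θ)
    (hstep : A.LiftsPairing Θ₀ Θ) : A.IsDegreePairing (n + 2) (A.extendPairing n Θ) where
  proj_left := extendPairing_proj_left
  proj_right := extendPairing_proj_right hΘ
  skew_deg0 _ hc := extendPairing_skew_deg0 hΘ hstep hc

lemma liftsPairing_extendPairing (hΘ : A.IsDegreePairing (n + 1) Θ)
    (hstep : A.LiftsPairing Θ₀ Θ) : A.LiftsPairing Θ (A.extendPairing n Θ) where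
  lift_deg1 _ hv := extendPairing_lie_deg1 hΘ hstep hv
  lift_degNeg1 _ hφ := extendPairing_lie_degNeg1 hΘ hstep hφ

end extension

noncomputable def pairing : ℕ → L →ₗ[k] L →ₗ[k] k
  | 0 => A.pairing0
  | 1 => A.pairing1
  | n + 2 => A.extendPairing n (pairing (n + 1))

lemma pairing_spec (hB : ∀ a b : g, P.B a b = P.B b a) : ∀ n : ℕ,
    A.IsDegreePairing (n + 1) (A.pairing (n + 1)) ∧ A.LiftsPairing (A.pairing n) (A.pairing (n + 1))
  | 0 => ⟨by rw [Nat.cast_zero, zero_add]; exact A.isDegreePairing_pairing1,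
      A.liftsPairing_pairing0_pairing1 hB⟩
  | n + 1 => by
    obtain ⟨hΘ, hstep⟩ := pairing_spec hB n
    have hdeg : ((n + 1 : ℕ) : ℤ) + 1 = n + 2 := by push_cast; ring
    exact ⟨hdeg ▸ isDegreePairing_extendPairing hΘ hstep, liftsPairing_extendPairing hΘ hstep⟩

lemma isDegreePairing_pairing (hB : ∀ a b : g, P.B a b = P.B b a) :
    ∀ n : ℕ, A.IsDegreePairing n (A.pairing n)
  | 0 => by rw [Nat.cast_zero]; exact A.isDegreePairing_pairing0
  | n + 1 => by rw [Nat.cast_succ]; exact (A.pairing_spec hB n).1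

noncomputable def gradedPairing (m : ℤ) : L →ₗ[k] L →ₗ[k] k :=
  if 0 ≤ m then A.pairing m.natAbs else (A.pairing m.natAbs).flip

lemma gradedPairing_proj_right (hB : ∀ a b : g, P.B a b = P.B b a) (m : ℤ) (x y : L) :
    A.gradedPairing m x (A.proj (-m) y) = A.gradedPairing m x y := by
  unfold gradedPairing
  split_ifs with hm
  · have := (A.isDegreePairing_pairing hB m.natAbs).proj_right x y
    rwa [Int.natAbs_of_nonneg hm] at this
  · have := (A.isDegreePairing_pairing hB m.natAbs).proj_left y x
    rwa [Int.ofNat_natAbs_of_nonpos (by omega)] at this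

lemma gradedPairing_neg_apply (hB : ∀ a b : g, P.B a b = P.B b a) (m : ℤ) (x y : L) :
    A.gradedPairing (-m) y x = A.gradedPairing m x y := by
  unfold gradedPairing
  rw [Int.natAbs_neg]
  rcases lt_trichotomy m 0 with hm | rfl | hm
  · rw [if_pos (by omega), if_neg (by omega), LinearMap.flip_apply]
  · simp only [neg_zero, le_refl, if_true]
    exact hB _ _
  · rw [if_neg (by omega), if_pos (by omega), LinearMap.flip_apply]

noncomputable def invariantForm : L →ₗ[k] L →ₗ[k] k :=
  DirectSum.toModule k ℤ (L →ₗ[k] k) (fun m => A.gradedPairing m ∘ₗ (A.grading m).subtype) ∘ₗ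
    (DirectSum.decomposeLinearEquiv A.grading).toLinearMap

lemma invariantForm_of_mem {m : ℤ} {x : L} (hx : x ∈ A.grading m) (y : L) :
    A.invariantForm x y = A.gradedPairing m x y := by
  rw [invariantForm, LinearMap.comp_apply, LinearEquiv.coe_coe,
    show x = ((⟨x, hx⟩ : A.grading m) : L) from rfl, DirectSum.decomposeLinearEquiv_apply_coe,
    DirectSum.toModule_lof]
  rfl

lemma invariantForm_of_mem_nat {n : ℕ} {x : L} (hx : x ∈ A.grading n) (y : L) :
    A.invariantForm x y = A.pairing n x y := by
  rw [A.invariantForm_of_mem hx, gradedPairing, if_pos (by omega), Int.natAbs_natCast]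

lemma invariantForm_eq_zero (hB : ∀ a b : g, P.B a b = P.B b a) {m c : ℤ} (h : m + c ≠ 0)
    {x y : L} (hx : x ∈ A.grading m) (hy : y ∈ A.grading c) : A.invariantForm x y = 0 := by
  rw [A.invariantForm_of_mem hx, ← A.gradedPairing_proj_right hB, A.proj_of_mem_of_ne hy (by omega),
    map_zero]

lemma invariantForm_comm (hB : ∀ a b : g, P.B a b = P.B b a) (x y : L) :
    A.invariantForm x y = A.invariantForm y x := by
  induction x using A.induction_on_homogeneous with
  | zero => simp
  | add x x' hx hx' => simp only [map_add, LinearMap.add_apply, hx, hx']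
  | mem m x hx =>
    induction y using A.induction_on_homogeneous with
    | zero => simp
    | add y y' hy hy' => simp only [map_add, LinearMap.add_apply, hy, hy']
    | mem c y hy =>
      by_cases h : m + c = 0
      · obtain rfl : c = -m := by omega
        rw [A.invariantForm_of_mem hx, A.invariantForm_of_mem hy, A.gradedPairing_neg_apply hB]
      · rw [A.invariantForm_eq_zero hB h hx hy, A.invariantForm_eq_zero hB (by omega) hy hx]

lemma invariantForm_proj_left (hB : ∀ a b : g, P.B a b = P.B b a) (m : ℤ) (x y : L) :
    A.invariantForm (A.proj m x) y = A.invariantForm x (A.proj (-m) y) := by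
  induction x using A.induction_on_homogeneous with
  | zero => simp
  | add x x' hx hx' => simp only [map_add, LinearMap.add_apply, hx, hx']
  | mem j x hx =>
    by_cases hj : j = m
    · subst hj
      rw [A.proj_of_mem hx, A.invariantForm_of_mem hx, A.invariantForm_of_mem hx,
        A.gradedPairing_proj_right hB]
    · rw [A.proj_of_mem_of_ne hx hj, map_zero, LinearMap.zero_apply,
        A.invariantForm_eq_zero hB (by omega) hx (A.proj_mem _ y)]

lemma ad_isSkewAdjoint_of_mem (hB : ∀ a b : g, P.B a b = P.B b a) {d : ℤ} (hd₁ : -1 ≤ d)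
    (hd₂ : d ≤ 1) {y : L} (hy : y ∈ A.grading d)
    (h : ∀ n : ℕ, 0 ≤ (n : ℤ) + d → ∀ x ∈ A.grading n, ∀ z,
      A.invariantForm ⁅y, x⁆ z = -A.invariantForm x ⁅y, z⁆) (x z : L) :
    A.invariantForm ⁅y, x⁆ z = -A.invariantForm x ⁅y, z⁆ := by
  induction x using A.induction_on_homogeneous with
  | zero => simp
  | add x x' hx hx' => simp only [lie_add, map_add, LinearMap.add_apply, hx, hx', neg_add]
  | mem m x hx =>
    induction z using A.induction_on_homogeneous with
    | zero => simp
    | add z z' hz hz' => simp only [lie_add, map_add, hz, hz', neg_add]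
    | mem c z hz =>
      by_cases hsum : d + m + c = 0
      · by_cases hm : 0 ≤ m ∧ 0 ≤ m + d
        · lift m to ℕ using hm.1
          exact h m hm.2 x hx z
        · -- then `z` has non-negative degree, and symmetry lets `x` and `z` trade places
          lift c to ℕ using (by omega)
          rw [A.invariantForm_comm hB ⁅y, x⁆, A.invariantForm_comm hB x, h c (by omega) z hz x,
            neg_neg]
      · rw [A.invariantForm_eq_zero hB (m := d + m) (c := c) hsum
            (A.lie_mem d m y hy x hx) hz,
          A.invariantForm_eq_zero hB (m := m) (c := d + c) (by omega) hx
            (A.lie_mem d c y hy z hz), neg_zero]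

attribute [local instance] LieRing.ofAssociativeRing in
lemma invariantForm_lie (hB : ∀ a b : g, P.B a b = P.B b a) (x y z : L) :
    A.invariantForm ⁅x, y⁆ z = A.invariantForm x ⁅y, z⁆ := by
  set K := (skewAdjointLieSubalgebra A.invariantForm).comap (LieAlgebra.ad k L)
  have hK : ∀ {d : ℤ}, -1 ≤ d → d ≤ 1 → ∀ y ∈ A.grading d, (∀ n : ℕ, 0 ≤ (n : ℤ) + d →
      ∀ x ∈ A.grading n, ∀ z, A.invariantForm ⁅y, x⁆ z = -A.invariantForm x ⁅y, z⁆) → y ∈ K :=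
    fun hd₁ hd₂ y hy h => A.ad_isSkewAdjoint_of_mem hB hd₁ hd₂ hy h
  have htop : K = ⊤ := by
    refine A.lieSubalgebra_eq_top (fun c hc => hK (d := 0) (by norm_num) (by norm_num) c hc ?_)
      (fun v hv => hK (d := 1) (by norm_num) le_rfl v hv ?_)
      (fun φ hφ => hK (d := -1) le_rfl (by norm_num) φ hφ ?_)
    · intro n _ x hx z
      rw [A.invariantForm_of_mem_nat hx,
        A.invariantForm_of_mem_nat (by simpa using A.lie_mem 0 n c hc x hx),
        (A.isDegreePairing_pairing hB n).skew_deg0 c hc]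
    · intro n _ x hx z
      rw [A.invariantForm_of_mem_nat hx, A.invariantForm_of_mem_nat (n := n + 1)
        (A.lie_mem_of_add_eq (by push_cast; ring) hv hx), (A.pairing_spec hB n).2.lift_deg1 v hv]
    · rintro (_ | n) hn x hx z
      · omega
      rw [A.invariantForm_of_mem_nat hx, A.invariantForm_of_mem_nat (n := n)
        (A.lie_mem_of_add_eq (by push_cast; ring) hφ hx), (A.pairing_spec hB n).2.lift_degNeg1 φ hφ,
        neg_neg]
  have hy : ∀ x z, A.invariantForm ⁅y, x⁆ z = -A.invariantForm x ⁅y, z⁆ :=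
    (htop ▸ LieSubalgebra.mem_top y : y ∈ K)
  rw [← lie_skew, map_neg, LinearMap.neg_apply, hy, neg_neg]

lemma invariantForm_ιg_ιg (a b : g) : A.invariantForm (A.ιg a) (A.ιg b) = P.B a b := by
  rw [A.invariantForm_of_mem_nat (n := 0) (by simpa using A.ιg_mem a)]
  simp [pairing, pairing0_apply]

lemma invariantForm_ιV_ιW (v : V) (w : W) : A.invariantForm (A.ιV v) (A.ιW w) = P.pair v w := by
  rw [A.invariantForm_of_mem_nat (n := 1) (by simpa using A.ιV_mem v)]
  simp [pairing, pairing1_apply]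

lemma eq_zero_of_mem_of_invariantForm_eq_zero_nonneg (hB : ∀ a b : g, P.B a b = P.B b a) :
    ∀ n : ℕ, ∀ x ∈ A.grading n, (∀ y, A.invariantForm x y = 0) → x = 0
  | 0, x, hx, h => by
    have hx : x ∈ A.grading 0 := by simpa using hx
    have hcoord : A.coordG x = 0 := P.B_nondeg_left _ fun b => by
      simpa [A.invariantForm_of_mem_nat (n := 0) (by simpa using hx), pairing, pairing0_apply]
        using h (A.ιg b)
    rw [← A.proj_of_mem hx, ← ιg_coordG, hcoord, map_zero]
  | 1, x, hx, h => by
    have hx : x ∈ A.grading 1 := by simpa using hx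
    have hcoord : A.coordV x = 0 := P.pair_nondeg_left _ fun w => by
      simpa [A.invariantForm_of_mem_nat (n := 1) (by simpa using hx), pairing, pairing1_apply]
        using h (A.ιW w)
    rw [← A.proj_of_mem hx, ← ιV_coordV, hcoord, map_zero]
  | n + 2, x, hx, h => A.trans_pos (n + 2) (by omega) x (by exact_mod_cast hx) fun φ hφ =>
    eq_zero_of_mem_of_invariantForm_eq_zero_nonneg hB (n + 1) _
      (A.lie_mem_of_add_eq (by push_cast; ring) hx hφ)
      fun y => by rw [A.invariantForm_lie hB, h]

lemma eq_zero_of_mem_of_invariantForm_eq_zero_neg (hB : ∀ a b : g, P.B a b = P.B b a) :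
    ∀ n : ℕ, ∀ x ∈ A.grading (-(n + 1)), (∀ y, A.invariantForm x y = 0) → x = 0
  | 0, x, hx, h => by
    have hx : x ∈ A.grading (-1) := by simpa using hx
    have hcoord : A.coordW x = 0 := P.pair_nondeg_right _ fun v => by
      simpa [A.invariantForm_comm hB x, A.invariantForm_of_mem_nat (n := 1)
        (by simpa using A.ιV_mem v), pairing, pairing1_apply] using h (A.ιV v)
    rw [← A.proj_of_mem hx, ← ιW_coordW, hcoord, map_zero]
  | n + 1, x, hx, h => A.trans_neg (n + 2) (by omega) x (by convert hx using 2; push_cast; ring)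
    fun v hv => eq_zero_of_mem_of_invariantForm_eq_zero_neg hB n _
      (A.lie_mem_of_add_eq (by push_cast; ring) hx hv)
      fun y => by rw [A.invariantForm_lie hB, h]

lemma invariantForm_nondegenerate (hB : ∀ a b : g, P.B a b = P.B b a) (x : L)
    (h : ∀ y, A.invariantForm x y = 0) : x = 0 := by
  refine A.eq_zero_of_forall_proj_eq_zero fun m => ?_
  have hm : ∀ y, A.invariantForm (A.proj m x) y = 0 := fun y => by
    rw [A.invariantForm_proj_left hB, h]
  obtain ⟨n, rfl | rfl⟩ := Int.eq_nat_or_neg m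
  · exact A.eq_zero_of_mem_of_invariantForm_eq_zero_nonneg hB n _ (A.proj_mem _ x) hm
  · cases n with
    | zero =>
      exact A.eq_zero_of_mem_of_invariantForm_eq_zero_nonneg hB 0 _
        (by simpa using A.proj_mem (-0) x) hm
    | succ n =>
      exact A.eq_zero_of_mem_of_invariantForm_eq_zero_neg hB n _
        (by exact_mod_cast A.proj_mem _ x) hm

end AssocGradedLieAlgebra

/-- Let `(g, ρ, V, 𝒱, B₀)` be a standard pentad with `B₀` symmetric.  Then
there exists a non-degenerate symmetric invariant bilinear form `B_L` on the associated graded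
Lie algebra `L(g,ρ,V,𝒱,B₀) = ⊕ₙ Vₙ` such that `B_L` restricted to `V₀ × V₀` equals `B₀`,
`B_L(v, φ) = φ(v)` for `v ∈ V₁ = V` and `φ ∈ V₋₁ = 𝒱`, and `B_L(Vₙ, Vₘ) = 0` whenever
`n + m ≠ 0`. -/
theorem statement8
    {k g V W L : Type*} [Field k] [LieRing g] [LieAlgebra k g]
    [AddCommGroup V] [Module k V] [AddCommGroup W] [Module k W]
    [LieRing L] [LieAlgebra k L]
    (P : PentadStruct k g V W)
    (hBsymm : ∀ a b : g, P.B a b = P.B b a)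
    (A : AssocGradedLieAlgebra k g V W P L) :
    ∃ BL : L →ₗ[k] L →ₗ[k] k,
      -- non-degenerate
      (∀ x : L, (∀ y : L, BL x y = 0) → x = 0)
      -- symmetric
      ∧ (∀ x y : L, BL x y = BL y x)
      -- invariant
      ∧ (∀ x y z : L, BL ⁅x, y⁆ z = BL x ⁅y, z⁆)
      -- restriction to `V₀ × V₀` is `B₀`
      ∧ (∀ a b : g, BL (A.ιg a) (A.ιg b) = P.B a b)
      -- restriction to `V₁ × V₋₁` is the canonical pairing `(v, φ) ↦ φ(v)`
      ∧ (∀ (v : V) (w : W), BL (A.ιV v) (A.ιW w) = P.pair v w)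
      -- `B_L(Vₙ, Vₘ) = 0` for `n + m ≠ 0`
      ∧ (∀ n m : ℤ, n + m ≠ 0 → ∀ x ∈ A.grading n, ∀ y ∈ A.grading m, BL x y = 0) :=
  ⟨A.invariantForm, A.invariantForm_nondegenerate hBsymm, A.invariantForm_comm hBsymm,
    A.invariantForm_lie hBsymm, A.invariantForm_ιg_ιg, A.invariantForm_ιV_ιW,
    fun _ _ h _ hx _ hy => A.invariantForm_eq_zero hBsymm h hx hy⟩
end

section
/- Let (g¹,ρ¹,V¹,𝒱¹,B₀¹) and (g²,ρ²,V²,𝒱²,B₀²) be equivalent standard pentads. Then the associated graded Lie algebras are isomorphic: L(g¹,ρ¹,V¹,𝒱¹,B₀¹) ≅ L(g²,ρ²,V²,𝒱²,B₀²). -/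
/-!
The isomorphism is built as its graph. Inside `L₁ × L₂` the graphs of `τ`, `σ` and `c⁻¹ • ς`
(the rescaling turns `hB` into the compatibility of the Φ-maps) form a local part
`Γ₀, Γ₁, Γ₋₁`, closed under the brackets of degrees `0 + 0`, `0 ± 1` and `1 - 1`. The iterated
brackets `Γₙ₊₁ = [Γ₁, Γₙ]`, `Γ₋ₙ₋₁ = [Γ₋₁, Γ₋ₙ]` add up to a Lie subalgebra by the Jacobi identity.
Each `Γₙ` is the graph of a linear isomorphism between the degree `n` pieces: its projections
are onto because both algebras are generated by their local parts, and injective by induction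
on `|n|`, because bracketing with `Γ∓₁` lowers `|n|` and both algebras are transitive. Since the
gradings are direct sums, both projections of the subalgebra are bijective.
-/
section BracketSpan

variable {k M N : Type*} [CommRing k] [LieRing M] [LieAlgebra k M] [LieRing N] [LieAlgebra k N]

def bracketSpan (A B : Submodule k M) : Submodule k M :=
  Submodule.span k {z | ∃ x ∈ A, ∃ y ∈ B, z = ⁅x, y⁆}

lemma lie_mem_bracketSpan {A B : Submodule k M} {x y : M} (hx : x ∈ A) (hy : y ∈ B) :
    ⁅x, y⁆ ∈ bracketSpan A B :=
  Submodule.subset_span ⟨x, hx, y, hy, rfl⟩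

lemma bracketSpan_le {A B C : Submodule k M} (h : ∀ x ∈ A, ∀ y ∈ B, ⁅x, y⁆ ∈ C) :
    bracketSpan A B ≤ C := by
  rw [bracketSpan, Submodule.span_le]
  rintro _ ⟨x, hx, y, hy, rfl⟩
  exact h x hx y hy

lemma lie_mem_swap {C : Submodule k M} {x y : M} (h : ⁅y, x⁆ ∈ C) : ⁅x, y⁆ ∈ C := by
  rw [← lie_skew]
  exact C.neg_mem h

lemma lie_mem_of_mem_bracketSpan {A B C : Submodule k M} {x z : M}
    (h : ∀ a ∈ A, ∀ b ∈ B, ⁅x, ⁅a, b⁆⁆ ∈ C) (hz : z ∈ bracketSpan A B) : ⁅x, z⁆ ∈ C :=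
  bracketSpan_le (C := C.comap (LieAlgebra.ad k M x)) h hz

lemma lie_mem_of_mem_iSup {ι : Sort*} {p : ι → Submodule k M} {C : Submodule k M} {x z : M}
    (h : ∀ i, ∀ y ∈ p i, ⁅x, y⁆ ∈ C) (hz : z ∈ ⨆ i, p i) : ⁅x, z⁆ ∈ C :=
  iSup_le (ι := ι) (a := C.comap (LieAlgebra.ad k M x)) (fun i y hy => h i y hy) hz

lemma map_bracketSpan (f : M →ₗ⁅k⁆ N) (A B : Submodule k M) :
    (bracketSpan A B).map (f : M →ₗ[k] N) =
      bracketSpan (A.map (f : M →ₗ[k] N)) (B.map (f : M →ₗ[k] N)) := by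
  rw [bracketSpan, Submodule.map_span]
  congr 1
  ext z
  constructor
  · rintro ⟨_, ⟨x, hx, y, hy, rfl⟩, rfl⟩
    exact ⟨f x, Submodule.mem_map_of_mem hx, f y, Submodule.mem_map_of_mem hy, f.map_lie x y⟩
  · rintro ⟨_, ⟨x, hx, rfl⟩, _, ⟨y, hy, rfl⟩, rfl⟩
    exact ⟨⁅x, y⁆, ⟨x, hx, y, hy, rfl⟩, f.map_lie x y⟩

end BracketSpan

structure LieLocalPart (k M : Type*) [CommRing k] [LieRing M] [LieAlgebra k M] where
  deg0 : Submodule k M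
  deg1 : Submodule k M
  degNeg1 : Submodule k M
  lie_deg0_deg0 : ∀ x ∈ deg0, ∀ y ∈ deg0, ⁅x, y⁆ ∈ deg0
  lie_deg0_deg1 : ∀ x ∈ deg0, ∀ y ∈ deg1, ⁅x, y⁆ ∈ deg1
  lie_deg0_degNeg1 : ∀ x ∈ deg0, ∀ y ∈ degNeg1, ⁅x, y⁆ ∈ degNeg1
  lie_deg1_degNeg1 : ∀ x ∈ deg1, ∀ y ∈ degNeg1, ⁅x, y⁆ ∈ deg0

namespace LieLocalPart

variable {k M : Type*} [CommRing k] [LieRing M] [LieAlgebra k M] (Q : LieLocalPart k M)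

def swap : LieLocalPart k M where
  deg0 := Q.deg0
  deg1 := Q.degNeg1
  degNeg1 := Q.deg1
  lie_deg0_deg0 := Q.lie_deg0_deg0
  lie_deg0_deg1 := Q.lie_deg0_degNeg1
  lie_deg0_degNeg1 := Q.lie_deg0_deg1
  lie_deg1_degNeg1 x hx y hy := lie_mem_swap (Q.lie_deg1_degNeg1 y hy x hx)

def posPart : ℕ → Submodule k M
  | 0 => Q.deg1
  | n + 1 => bracketSpan Q.deg1 (posPart n)

def negPart (n : ℕ) : Submodule k M :=
  Q.swap.posPart n

def piece : ℤ → Submodule k M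
  | 0 => Q.deg0
  | Int.ofNat (n + 1) => Q.posPart n
  | Int.negSucc n => Q.negPart n

def generated : Submodule k M :=
  ⨆ i, Q.piece i

lemma piece_swap (i : ℤ) : Q.swap.piece i = Q.piece (-i) := by
  rcases i with (_ | n) | n <;> rfl

lemma generated_swap : Q.swap.generated = Q.generated := by
  simp only [generated, piece_swap]
  exact (Equiv.neg ℤ).iSup_comp (g := Q.piece)

lemma piece_le_generated (i : ℤ) : Q.piece i ≤ Q.generated :=
  le_iSup Q.piece i

lemma lie_deg0_posPart (n : ℕ) : ∀ x ∈ Q.deg0, ∀ z ∈ Q.posPart n, ⁅x, z⁆ ∈ Q.posPart n := by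
  induction n with
  | zero => exact Q.lie_deg0_deg1
  | succ n ih =>
    intro x hx z hz
    refine lie_mem_of_mem_bracketSpan (fun a ha b hb => ?_) hz
    rw [leibniz_lie]
    exact add_mem (lie_mem_bracketSpan (Q.lie_deg0_deg1 x hx a ha) hb)
      (lie_mem_bracketSpan ha (ih x hx b hb))

lemma posPart_succ_lie_degNeg1 (n : ℕ) :
    ∀ z ∈ Q.posPart (n + 1), ∀ w ∈ Q.degNeg1, ⁅z, w⁆ ∈ Q.posPart n := by
  induction n with
  | zero =>
    intro z hz w hw
    refine lie_mem_swap (lie_mem_of_mem_bracketSpan (fun a ha b hb => ?_) hz)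
    rw [leibniz_lie]
    exact add_mem
      (Q.lie_deg0_deg1 _ (lie_mem_swap (Q.lie_deg1_degNeg1 a ha w hw)) b hb)
      (lie_mem_swap (Q.lie_deg0_deg1 _ (lie_mem_swap (Q.lie_deg1_degNeg1 b hb w hw)) a ha))
  | succ n ih =>
    intro z hz w hw
    refine lie_mem_swap (lie_mem_of_mem_bracketSpan (fun a ha b hb => ?_) hz)
    rw [leibniz_lie]
    exact add_mem
      (Q.lie_deg0_posPart (n + 1) _ (lie_mem_swap (Q.lie_deg1_degNeg1 a ha w hw)) b hb)
      (lie_mem_bracketSpan ha (lie_mem_swap (ih b hb w hw)))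

lemma deg1_lie_mem_generated : ∀ v ∈ Q.deg1, ∀ z ∈ Q.generated, ⁅v, z⁆ ∈ Q.generated := by
  intro v hv z hz
  refine lie_mem_of_mem_iSup (fun i y hy => ?_) hz
  rcases i with (_ | n) | _ | m
  · exact Q.piece_le_generated 1 (lie_mem_swap (Q.lie_deg0_deg1 y hy v hv))
  · exact Q.piece_le_generated (n + 2 : ℕ) (lie_mem_bracketSpan hv hy)
  · exact Q.piece_le_generated 0 (Q.lie_deg1_degNeg1 v hv y hy)
  · exact Q.piece_le_generated (Int.negSucc m)
      (lie_mem_swap (Q.swap.posPart_succ_lie_degNeg1 m y hy v hv))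

lemma deg0_lie_mem_generated : ∀ x ∈ Q.deg0, ∀ z ∈ Q.generated, ⁅x, z⁆ ∈ Q.generated := by
  intro x hx z hz
  refine lie_mem_of_mem_iSup (fun i y hy => ?_) hz
  rcases i with (_ | n) | n
  · exact Q.piece_le_generated 0 (Q.lie_deg0_deg0 x hx y hy)
  · exact Q.piece_le_generated (n + 1 : ℕ) (Q.lie_deg0_posPart n x hx y hy)
  · exact Q.piece_le_generated (Int.negSucc n) (Q.swap.lie_deg0_posPart n x hx y hy)

lemma posPart_lie_mem_generated (n : ℕ) :
    ∀ x ∈ Q.posPart n, ∀ z ∈ Q.generated, ⁅x, z⁆ ∈ Q.generated := by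
  induction n with
  | zero => exact Q.deg1_lie_mem_generated
  | succ n ih =>
    intro x hx z hz
    refine lie_mem_swap (lie_mem_of_mem_bracketSpan (fun a ha b hb => ?_) hx)
    have hza : ⁅z, a⁆ ∈ Q.generated := lie_mem_swap (Q.deg1_lie_mem_generated a ha z hz)
    have hzb : ⁅z, b⁆ ∈ Q.generated := lie_mem_swap (ih b hb z hz)
    rw [leibniz_lie]
    exact add_mem (lie_mem_swap (ih b hb _ hza)) (Q.deg1_lie_mem_generated a ha _ hzb)

lemma lie_mem_generated : ∀ x ∈ Q.generated, ∀ z ∈ Q.generated, ⁅x, z⁆ ∈ Q.generated := by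
  intro x hx z hz
  refine lie_mem_swap (lie_mem_of_mem_iSup (fun i y hy => lie_mem_swap ?_) hx)
  rcases i with (_ | n) | n
  · exact Q.deg0_lie_mem_generated y hy z hz
  · exact Q.posPart_lie_mem_generated n y hy z hz
  · rw [← Q.generated_swap] at hz ⊢
    exact Q.swap.posPart_lie_mem_generated n y hy z hz

def generatedSubalgebra : LieSubalgebra k M where
  toSubmodule := Q.generated
  lie_mem' {x z} hx hz := Q.lie_mem_generated x hx z hz

end LieLocalPart

section Graph

variable {k L₁ L₂ : Type*} [CommRing k]

structure IsIsoGraph [AddCommGroup L₁] [Module k L₁] [AddCommGroup L₂] [Module k L₂]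
    (U₁ : Submodule k L₁) (U₂ : Submodule k L₂) (G : Submodule k (L₁ × L₂)) : Prop where
  map_fst : G.map (LinearMap.fst k L₁ L₂) = U₁
  map_snd : G.map (LinearMap.snd k L₁ L₂) = U₂
  eq_zero_of_fst : ∀ z ∈ G, z.1 = 0 → z = 0
  eq_zero_of_snd : ∀ z ∈ G, z.2 = 0 → z = 0

lemma isIsoGraph_range_prod [AddCommGroup L₁] [Module k L₁] [AddCommGroup L₂] [Module k L₂]
    {X Y : Type*} [AddCommGroup X] [Module k X] [AddCommGroup Y] [Module k Y]
    {i₁ : X →ₗ[k] L₁} {i₂ : Y →ₗ[k] L₂} (hi₁ : Function.Injective i₁)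
    (hi₂ : Function.Injective i₂) (e : X ≃ₗ[k] Y) :
    IsIsoGraph (LinearMap.range i₁) (LinearMap.range i₂)
      (LinearMap.range (i₁.prod (i₂ ∘ₗ (e : X →ₗ[k] Y)))) where
  map_fst := by rw [← LinearMap.range_comp, LinearMap.fst_prod]
  map_snd := by
    rw [← LinearMap.range_comp, LinearMap.snd_prod,
      LinearMap.range_comp_of_range_eq_top _ e.range]
  eq_zero_of_fst := by
    rintro _ ⟨x, rfl⟩ h
    obtain rfl : x = 0 := (map_eq_zero_iff i₁ hi₁).mp h
    exact map_zero _
  eq_zero_of_snd := by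
    rintro _ ⟨x, rfl⟩ h
    obtain rfl : x = 0 := e.map_eq_zero_iff.mp ((map_eq_zero_iff i₂ hi₂).mp h)
    exact map_zero _

variable [LieRing L₁] [LieAlgebra k L₁] [LieRing L₂] [LieAlgebra k L₂]

lemma IsIsoGraph.bracketSpan_of_transitive {X₁ Y₁ Z₁ : Submodule k L₁} {X₂ Y₂ Z₂ : Submodule k L₂}
    {GX GY GZ : Submodule k (L₁ × L₂)}
    (hX : IsIsoGraph X₁ X₂ GX) (hY : IsIsoGraph Y₁ Y₂ GY) (hZ : IsIsoGraph Z₁ Z₂ GZ)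
    (htrans₁ : ∀ x ∈ bracketSpan X₁ Y₁, (∀ z ∈ Z₁, ⁅x, z⁆ = 0) → x = 0)
    (htrans₂ : ∀ x ∈ bracketSpan X₂ Y₂, (∀ z ∈ Z₂, ⁅x, z⁆ = 0) → x = 0)
    (hlower : ∀ u ∈ bracketSpan GX GY, ∀ z ∈ GZ, ⁅u, z⁆ ∈ GY) :
    IsIsoGraph (bracketSpan X₁ Y₁) (bracketSpan X₂ Y₂) (bracketSpan GX GY) := by
  have hfst : (bracketSpan GX GY).map (LinearMap.fst k L₁ L₂) = bracketSpan X₁ Y₁ := by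
    rw [← hX.map_fst, ← hY.map_fst]
    exact map_bracketSpan (LieHom.fst k L₁ L₂) GX GY
  have hsnd : (bracketSpan GX GY).map (LinearMap.snd k L₁ L₂) = bracketSpan X₂ Y₂ := by
    rw [← hX.map_snd, ← hY.map_snd]
    exact map_bracketSpan (LieHom.snd k L₁ L₂) GX GY
  refine ⟨hfst, hsnd, fun u hu h₁ => ?_, fun u hu h₂ => ?_⟩
  · refine Prod.ext h₁ (htrans₂ u.2 (hsnd ▸ Submodule.mem_map_of_mem hu) fun y hy => ?_)
    rw [← hZ.map_snd] at hy
    obtain ⟨z, hz, rfl⟩ := hy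
    have hbr := hY.eq_zero_of_fst _ (hlower u hu z hz) (by simp [h₁])
    exact congrArg Prod.snd hbr
  · refine Prod.ext (htrans₁ u.1 (hfst ▸ Submodule.mem_map_of_mem hu) fun y hy => ?_) h₂
    rw [← hZ.map_fst] at hy
    obtain ⟨z, hz, rfl⟩ := hy
    have hbr := hY.eq_zero_of_snd _ (hlower u hu z hz) (by simp [h₂])
    exact congrArg Prod.fst hbr

end Graph

lemma LinearMap.bijective_domRestrict_iSup {k M N ι : Type*} [CommRing k] [AddCommGroup M]
    [Module k M] [AddCommGroup N] [Module k N] (π : M →ₗ[k] N) {G : ι → Submodule k M}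
    {U : ι → Submodule k N} (hU : iSupIndep U) (htop : ⨆ i, U i = ⊤)
    (hmap : ∀ i, (G i).map π = U i) (hinj : ∀ i, ∀ z ∈ G i, π z = 0 → z = 0) :
    Function.Bijective (π.domRestrict (⨆ i, G i)) := by
  refine ⟨LinearMap.injective_domRestrict_iff.mpr
    (Submodule.disjoint_def.mpr fun z hz hker => ?_), LinearMap.range_eq_top.mp ?_⟩
  · obtain ⟨f, hf, rfl⟩ := (Submodule.mem_iSup_iff_exists_finsupp G z).mp hz
    rw [Finsupp.sum] at hker ⊢
    have hπ : ∀ i ∈ f.support, π (f i) = 0 :=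
      (iSupIndep_iff_finsetSum_eq_zero_imp_eq_zero U).mp hU f.support (fun i => π (f i))
        (fun i _ => hmap i ▸ Submodule.mem_map_of_mem (hf i))
        (by rw [← map_sum]; exact hker)
    exact Finset.sum_eq_zero fun i hi => hinj i _ (hf i) (hπ i hi)
  · rw [LinearMap.range_domRestrict, Submodule.map_iSup]
    simp only [hmap, htop]

namespace AssocGradedLieAlgebra

variable {k g₁ V₁ W₁ L₁ g₂ V₂ W₂ L₂ : Type*} [Field k]
  [LieRing g₁] [LieAlgebra k g₁] [AddCommGroup V₁] [Module k V₁]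
  [AddCommGroup W₁] [Module k W₁] [LieRing L₁] [LieAlgebra k L₁]
  [LieRing g₂] [LieAlgebra k g₂] [AddCommGroup V₂] [Module k V₂]
  [AddCommGroup W₂] [Module k W₂] [LieRing L₂] [LieAlgebra k L₂]
  {P₁ : PentadStruct k g₁ V₁ W₁} {P₂ : PentadStruct k g₂ V₂ W₂}
  (A₁ : AssocGradedLieAlgebra k g₁ V₁ W₁ P₁ L₁) (A₂ : AssocGradedLieAlgebra k g₂ V₂ W₂ P₂ L₂)
  {Q : LieLocalPart k (L₁ × L₂)}

lemma grading_succ {i : ℤ} (hi : 1 ≤ i) :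
    A₁.grading (i + 1) = bracketSpan (A₁.grading 1) (A₁.grading i) :=
  A₁.span_pos i hi

lemma grading_neg_sub_one {i : ℤ} (hi : 1 ≤ i) :
    A₁.grading (-i - 1) = bracketSpan (A₁.grading (-1)) (A₁.grading (-i)) :=
  A₁.span_neg i hi

lemma eq_zero_of_mem_bracketSpan_pos {i : ℤ} (hi : 1 ≤ i) {x : L₁}
    (hx : x ∈ bracketSpan (A₁.grading 1) (A₁.grading i))
    (h : ∀ y ∈ A₁.grading (-1), ⁅x, y⁆ = 0) : x = 0 :=
  A₁.trans_pos (i + 1) (by omega) x ((A₁.grading_succ hi).ge hx) h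

lemma eq_zero_of_mem_bracketSpan_neg {i : ℤ} (hi : 1 ≤ i) {x : L₁}
    (hx : x ∈ bracketSpan (A₁.grading (-1)) (A₁.grading (-i)))
    (h : ∀ y ∈ A₁.grading 1, ⁅x, y⁆ = 0) : x = 0 :=
  A₁.trans_neg (i + 1) (by omega) x (by rw [neg_add']; exact (A₁.grading_neg_sub_one hi).ge hx) h

lemma isIsoGraph_posPart (h1 : IsIsoGraph (A₁.grading 1) (A₂.grading 1) Q.deg1)
    (hm1 : IsIsoGraph (A₁.grading (-1)) (A₂.grading (-1)) Q.degNeg1) (n : ℕ) :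
    IsIsoGraph (A₁.grading (n + 1)) (A₂.grading (n + 1)) (Q.posPart n) := by
  induction n with
  | zero => rw [Nat.cast_zero, zero_add]; exact h1
  | succ n ih =>
    have hn : (1 : ℤ) ≤ n + 1 := by omega
    rw [Nat.cast_succ, A₁.grading_succ hn, A₂.grading_succ hn]
    exact h1.bracketSpan_of_transitive ih hm1 (fun _ => A₁.eq_zero_of_mem_bracketSpan_pos hn)
      (fun _ => A₂.eq_zero_of_mem_bracketSpan_pos hn) (Q.posPart_succ_lie_degNeg1 n)

lemma isIsoGraph_negPart (h1 : IsIsoGraph (A₁.grading 1) (A₂.grading 1) Q.deg1)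
    (hm1 : IsIsoGraph (A₁.grading (-1)) (A₂.grading (-1)) Q.degNeg1) (n : ℕ) :
    IsIsoGraph (A₁.grading (-n - 1)) (A₂.grading (-n - 1)) (Q.negPart n) := by
  induction n with
  | zero => rw [Nat.cast_zero, neg_zero, zero_sub]; exact hm1
  | succ n ih =>
    have hn : (1 : ℤ) ≤ n + 1 := by omega
    rw [← neg_add'] at ih
    rw [Nat.cast_succ, A₁.grading_neg_sub_one hn, A₂.grading_neg_sub_one hn]
    exact hm1.bracketSpan_of_transitive ih h1 (fun _ => A₁.eq_zero_of_mem_bracketSpan_neg hn)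
      (fun _ => A₂.eq_zero_of_mem_bracketSpan_neg hn) (Q.swap.posPart_succ_lie_degNeg1 n)

lemma isIsoGraph_piece (h0 : IsIsoGraph (A₁.grading 0) (A₂.grading 0) Q.deg0)
    (h1 : IsIsoGraph (A₁.grading 1) (A₂.grading 1) Q.deg1)
    (hm1 : IsIsoGraph (A₁.grading (-1)) (A₂.grading (-1)) Q.degNeg1) :
    ∀ i, IsIsoGraph (A₁.grading i) (A₂.grading i) (Q.piece i)
  | 0 => h0
  | Int.ofNat (n + 1) => A₁.isIsoGraph_posPart A₂ h1 hm1 n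
  | Int.negSucc n => by
    have h := A₁.isIsoGraph_negPart A₂ h1 hm1 n
    rwa [← neg_add', ← Int.negSucc_eq] at h

theorem nonempty_lieEquiv_of_localPart (h0 : IsIsoGraph (A₁.grading 0) (A₂.grading 0) Q.deg0)
    (h1 : IsIsoGraph (A₁.grading 1) (A₂.grading 1) Q.deg1)
    (hm1 : IsIsoGraph (A₁.grading (-1)) (A₂.grading (-1)) Q.degNeg1) :
    Nonempty (L₁ ≃ₗ⁅k⁆ L₂) := by
  have hpiece := A₁.isIsoGraph_piece A₂ h0 h1 hm1
  let K := Q.generatedSubalgebra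
  have hfst : Function.Bijective ((LieHom.fst k L₁ L₂).comp K.incl) :=
    (LinearMap.fst k L₁ L₂).bijective_domRestrict_iSup A₁.isInternal.submodule_iSupIndep
      A₁.isInternal.submodule_iSup_eq_top (fun i => (hpiece i).map_fst)
      (fun i => (hpiece i).eq_zero_of_fst)
  have hsnd : Function.Bijective ((LieHom.snd k L₁ L₂).comp K.incl) :=
    (LinearMap.snd k L₁ L₂).bijective_domRestrict_iSup A₂.isInternal.submodule_iSupIndep
      A₂.isInternal.submodule_iSup_eq_top (fun i => (hpiece i).map_snd)
      (fun i => (hpiece i).eq_zero_of_snd)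
  exact ⟨(LieEquiv.ofBijective _ hfst).symm.trans (LieEquiv.ofBijective _ hsnd)⟩

end AssocGradedLieAlgebra

lemma PentadStruct.Φ_eq_of_equiv {k g₁ V₁ W₁ g₂ V₂ W₂ : Type*} [Field k]
    [LieRing g₁] [LieAlgebra k g₁] [AddCommGroup V₁] [Module k V₁]
    [AddCommGroup W₁] [Module k W₁]
    [LieRing g₂] [LieAlgebra k g₂] [AddCommGroup V₂] [Module k V₂]
    [AddCommGroup W₂] [Module k W₂]
    {P₁ : PentadStruct k g₁ V₁ W₁} {P₂ : PentadStruct k g₂ V₂ W₂}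
    (τ : g₁ ≃ₗ⁅k⁆ g₂) (σ : V₁ ≃ₗ[k] V₂) (ς : W₁ ≃ₗ[k] W₂) {c : k} (hc : c ≠ 0)
    (hσ : ∀ (a : g₁) (x : V₁), σ (P₁.ρ a x) = P₂.ρ (τ a) (σ x))
    (hpair : ∀ (x : V₁) (y : W₁), P₁.pair x y = P₂.pair (σ x) (ς y))
    (hB : ∀ a b : g₁, P₁.B a b = c * P₂.B (τ a) (τ b)) (x : V₁) (y : W₁) :
    P₂.Φ (σ x) (c⁻¹ • ς y) = τ (P₁.Φ x y) := by
  refine sub_eq_zero.mp (P₂.B_nondeg_right _ fun b => ?_)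
  rw [← τ.apply_symm_apply b]
  generalize τ.symm b = a
  have hB' : P₂.B (τ a) (τ (P₁.Φ x y)) = c⁻¹ * P₁.B a (P₁.Φ x y) := by
    rw [hB, inv_mul_cancel_left₀ hc]
  rw [map_sub, P₂.Φ_compat, hB', P₁.Φ_compat, hpair, hσ, map_smul, smul_eq_mul, sub_self]

namespace AssocGradedLieAlgebra

variable {k g₁ V₁ W₁ L₁ g₂ V₂ W₂ L₂ : Type*} [Field k]
  [LieRing g₁] [LieAlgebra k g₁] [AddCommGroup V₁] [Module k V₁]
  [AddCommGroup W₁] [Module k W₁] [LieRing L₁] [LieAlgebra k L₁]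
  [LieRing g₂] [LieAlgebra k g₂] [AddCommGroup V₂] [Module k V₂]
  [AddCommGroup W₂] [Module k W₂] [LieRing L₂] [LieAlgebra k L₂]
  {P₁ : PentadStruct k g₁ V₁ W₁} {P₂ : PentadStruct k g₂ V₂ W₂}

def graphLocalPart (A₁ : AssocGradedLieAlgebra k g₁ V₁ W₁ P₁ L₁)
    (A₂ : AssocGradedLieAlgebra k g₂ V₂ W₂ P₂ L₂)
    (τ : g₁ ≃ₗ⁅k⁆ g₂) (σ : V₁ ≃ₗ[k] V₂) (ς : W₁ ≃ₗ[k] W₂)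
    (hσ : ∀ (a : g₁) (x : V₁), σ (P₁.ρ a x) = P₂.ρ (τ a) (σ x))
    (hς : ∀ (a : g₁) (y : W₁), ς (P₁.ϱ a y) = P₂.ϱ (τ a) (ς y))
    (hΦ : ∀ (x : V₁) (y : W₁), P₂.Φ (σ x) (ς y) = τ (P₁.Φ x y)) :
    LieLocalPart k (L₁ × L₂) where
  deg0 := LinearMap.range (A₁.ιg.prod (A₂.ιg ∘ₗ (τ.toLinearEquiv : g₁ →ₗ[k] g₂)))
  deg1 := LinearMap.range (A₁.ιV.prod (A₂.ιV ∘ₗ (σ : V₁ →ₗ[k] V₂)))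
  degNeg1 := LinearMap.range (A₁.ιW.prod (A₂.ιW ∘ₗ (ς : W₁ →ₗ[k] W₂)))
  lie_deg0_deg0 := by
    rintro _ ⟨a, rfl⟩ _ ⟨b, rfl⟩
    exact ⟨⁅a, b⁆, Prod.ext (A₁.ιg_lie a b) (by simp [A₂.ιg_lie, τ.map_lie])⟩
  lie_deg0_deg1 := by
    rintro _ ⟨a, rfl⟩ _ ⟨x, rfl⟩
    exact ⟨P₁.ρ a x, Prod.ext (A₁.lie_ιV a x).symm (by simp [A₂.lie_ιV, hσ])⟩
  lie_deg0_degNeg1 := by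
    rintro _ ⟨a, rfl⟩ _ ⟨y, rfl⟩
    exact ⟨P₁.ϱ a y, Prod.ext (A₁.lie_ιW a y).symm (by simp [A₂.lie_ιW, hς])⟩
  lie_deg1_degNeg1 := by
    rintro _ ⟨x, rfl⟩ _ ⟨y, rfl⟩
    exact ⟨P₁.Φ x y, Prod.ext (A₁.lie_Φ x y).symm (by simp [A₂.lie_Φ, hΦ])⟩

theorem nonempty_lieEquiv_of_equiv (A₁ : AssocGradedLieAlgebra k g₁ V₁ W₁ P₁ L₁)
    (A₂ : AssocGradedLieAlgebra k g₂ V₂ W₂ P₂ L₂)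
    (τ : g₁ ≃ₗ⁅k⁆ g₂) (σ : V₁ ≃ₗ[k] V₂) (ς : W₁ ≃ₗ[k] W₂)
    (hσ : ∀ (a : g₁) (x : V₁), σ (P₁.ρ a x) = P₂.ρ (τ a) (σ x))
    (hς : ∀ (a : g₁) (y : W₁), ς (P₁.ϱ a y) = P₂.ϱ (τ a) (ς y))
    (hΦ : ∀ (x : V₁) (y : W₁), P₂.Φ (σ x) (ς y) = τ (P₁.Φ x y)) :
    Nonempty (L₁ ≃ₗ⁅k⁆ L₂) := by
  refine A₁.nonempty_lieEquiv_of_localPart A₂ (Q := A₁.graphLocalPart A₂ τ σ ς hσ hς hΦ) ?_ ?_ ?_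
  · rw [← A₁.ιg_range, ← A₂.ιg_range]
    exact isIsoGraph_range_prod A₁.ιg_inj A₂.ιg_inj τ.toLinearEquiv
  · rw [← A₁.ιV_range, ← A₂.ιV_range]
    exact isIsoGraph_range_prod A₁.ιV_inj A₂.ιV_inj σ
  · rw [← A₁.ιW_range, ← A₂.ιW_range]
    exact isIsoGraph_range_prod A₁.ιW_inj A₂.ιW_inj ς

end AssocGradedLieAlgebra

/-- If two standard pentads `(g¹,ρ¹,V¹,𝒱¹,B₀¹)` and `(g²,ρ²,V²,𝒱²,B₀²)` are
equivalent (via a Lie algebra isomorphism `τ`, linear isomorphisms `σ`, `ς` and a nonzero scalar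
`c` satisfying the compatibilities below), then the associated graded Lie algebras are
isomorphic: `L(g¹,ρ¹,V¹,𝒱¹,B₀¹) ≅ L(g²,ρ²,V²,𝒱²,B₀²)`. -/
theorem statement9
    {k g₁ V₁ W₁ L₁ g₂ V₂ W₂ L₂ : Type*} [Field k]
    [LieRing g₁] [LieAlgebra k g₁] [AddCommGroup V₁] [Module k V₁]
    [AddCommGroup W₁] [Module k W₁] [LieRing L₁] [LieAlgebra k L₁]
    [LieRing g₂] [LieAlgebra k g₂] [AddCommGroup V₂] [Module k V₂]
    [AddCommGroup W₂] [Module k W₂] [LieRing L₂] [LieAlgebra k L₂]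
    (P₁ : PentadStruct k g₁ V₁ W₁) (P₂ : PentadStruct k g₂ V₂ W₂)
    (A₁ : AssocGradedLieAlgebra k g₁ V₁ W₁ P₁ L₁)
    (A₂ : AssocGradedLieAlgebra k g₂ V₂ W₂ P₂ L₂)
    -- the equivalence of pentads:
    (τ : g₁ ≃ₗ⁅k⁆ g₂) (σ : V₁ ≃ₗ[k] V₂) (ς : W₁ ≃ₗ[k] W₂) (c : k) (hc : c ≠ 0)
    (hσ : ∀ (a : g₁) (x : V₁), σ (P₁.ρ a x) = P₂.ρ (τ a) (σ x))
    (hς : ∀ (a : g₁) (y : W₁), ς (P₁.ϱ a y) = P₂.ϱ (τ a) (ς y))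
    (hpair : ∀ (x : V₁) (y : W₁), P₁.pair x y = P₂.pair (σ x) (ς y))
    (hB : ∀ a b : g₁, P₁.B a b = c * P₂.B (τ a) (τ b)) :
    Nonempty (L₁ ≃ₗ⁅k⁆ L₂) := by
  let ς' : W₁ ≃ₗ[k] W₂ := ς.trans (LinearEquiv.smulOfNeZero k W₂ c⁻¹ (inv_ne_zero hc))
  refine A₁.nonempty_lieEquiv_of_equiv A₂ τ σ ς' hσ (fun a y => ?_)
    (PentadStruct.Φ_eq_of_equiv τ σ ς hc hσ hpair hB)
  simp [ς', hς]
end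

section
/- Let (g, ρ, V, 𝒱, B₀) be a standard pentad with symmetric B₀, let B_L be the induced non-degenerate symmetric invariant bilinear form on L = L(g,ρ,V,𝒱,B₀), and let α be a derivation of L. If B_L(α(z), ω) = -B_L(z, α(ω)) holds for all z ∈ V_n with n ∈ {0, ±1} and all ω ∈ L, then this equation holds for all z, ω ∈ L. -/
/-- Let `(g,ρ,V,𝒱,B₀)` be a standard pentad with `B₀` symmetric, let `B_L`
be the induced non-degenerate symmetric invariant bilinear form on `L = L(g,ρ,V,𝒱,B₀)`, and
let `α` be a derivation of `L`.  If `B_L(α z, ω) = -B_L(z, α ω)` for all `z ∈ Vₙ`,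
`n ∈ {0, ±1}`, and all `ω ∈ L`, then this equation holds for all `z, ω ∈ L`. -/
theorem statement14
    {k g V W L : Type*} [Field k] [LieRing g] [LieAlgebra k g]
    [AddCommGroup V] [Module k V] [AddCommGroup W] [Module k W]
    [LieRing L] [LieAlgebra k L]
    (P : PentadStruct k g V W)
    (hBsymm : ∀ a b : g, P.B a b = P.B b a)
    (A : AssocGradedLieAlgebra k g V W P L)
    -- the induced bilinear form `B_L` on `L`:
    (BL : L →ₗ[k] L →ₗ[k] k)
    (hBLnd : ∀ x : L, (∀ y : L, BL x y = 0) → x = 0)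
    (hBLsymm : ∀ x y : L, BL x y = BL y x)
    (hBLinv : ∀ x y z : L, BL ⁅x, y⁆ z = BL x ⁅y, z⁆)
    (hBL0 : ∀ a b : g, BL (A.ιg a) (A.ιg b) = P.B a b)
    (hBL1 : ∀ (v : V) (w : W), BL (A.ιV v) (A.ιW w) = P.pair v w)
    (hBLgr : ∀ n m : ℤ, n + m ≠ 0 → ∀ x ∈ A.grading n, ∀ y ∈ A.grading m, BL x y = 0)
    -- a derivation `α` of `L`:
    (α : L →ₗ[k] L)
    (hα : ∀ x y : L, α ⁅x, y⁆ = ⁅α x, y⁆ + ⁅x, α y⁆)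
    -- skew-symmetry of `α` with respect to `B_L` in degrees `0`, `±1`:
    (h0 : ∀ z ∈ A.grading 0, ∀ ω : L, BL (α z) ω = -BL z (α ω))
    (h1 : ∀ z ∈ A.grading 1, ∀ ω : L, BL (α z) ω = -BL z (α ω))
    (hm : ∀ z ∈ A.grading (-1), ∀ ω : L, BL (α z) ω = -BL z (α ω)) :
    ∀ z ω : L, BL (α z) ω = -BL z (α ω) := by
  set S : Submodule k L :=
    { carrier := {z | ∀ ω : L, BL (α z) ω = -BL z (α ω)}
      add_mem' := by
        intro a b ha hb ω
        simp only [map_add, LinearMap.add_apply, ha ω, hb ω]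
        ring
      zero_mem' := by intro ω; simp
      smul_mem' := by
        intro c a ha ω
        simp only [map_smul, LinearMap.smul_apply, ha ω, smul_neg] } with hSdef
  have hmemS : ∀ z : L, z ∈ S ↔ ∀ ω : L, BL (α z) ω = -BL z (α ω) := fun z => Iff.rfl
  have hlie : ∀ x y : L, x ∈ S → y ∈ S → ⁅x, y⁆ ∈ S := by
    intro x y hx hy
    rw [hmemS] at hx hy ⊢
    intro ω
    calc BL (α ⁅x, y⁆) ω = BL ⁅α x, y⁆ ω + BL ⁅x, α y⁆ ω := by
          rw [hα]; simp [map_add]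
      _ = BL (α x) ⁅y, ω⁆ + BL x ⁅α y, ω⁆ := by rw [hBLinv, hBLinv]
      _ = -BL x (α ⁅y, ω⁆) + BL x ⁅α y, ω⁆ := by rw [hx]
      _ = -(BL x ⁅α y, ω⁆ + BL x ⁅y, α ω⁆) + BL x ⁅α y, ω⁆ := by
          rw [hα]; simp [map_add]
      _ = -BL ⁅x, y⁆ (α ω) := by rw [hBLinv]; ring
  have hg1 : A.grading 1 ≤ S := fun z hz => h1 z hz
  have hgm1 : A.grading (-1) ≤ S := fun z hz => hm z hz
  have hspanP : ∀ i : ℤ, 1 ≤ i → A.grading i ≤ S → A.grading (i + 1) ≤ S := by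
    intro i hi h
    rw [A.span_pos i hi]
    refine Submodule.span_le.mpr ?_
    rintro z ⟨x, hx, y, hy, rfl⟩
    exact hlie x y (hg1 hx) (h hy)
  have hspanN : ∀ i : ℤ, 1 ≤ i → A.grading (-i) ≤ S → A.grading (-i - 1) ≤ S := by
    intro i hi h
    rw [A.span_neg i hi]
    refine Submodule.span_le.mpr ?_
    rintro z ⟨x, hx, y, hy, rfl⟩
    exact hlie x y (hgm1 hx) (h hy)
  have hP : ∀ n : ℕ, A.grading ((n : ℤ) + 1) ≤ S := by
    intro n
    induction n with
    | zero => simpa using hg1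
    | succ n ih =>
        have := hspanP ((n : ℤ) + 1) (by omega) ih
        convert this using 2 <;> push_cast <;> ring
  have hN : ∀ n : ℕ, A.grading (-((n : ℤ) + 1)) ≤ S := by
    intro n
    induction n with
    | zero => simpa using hgm1
    | succ n ih =>
        have := hspanN ((n : ℤ) + 1) (by omega) ih
        convert this using 2 <;> push_cast <;> ring
  have hall : ∀ n : ℤ, A.grading n ≤ S := by
    intro n
    rcases n with m | m
    · rcases m with _ | m
      · exact fun z hz => h0 z hz
      · simpa using hP m
    · have : (Int.negSucc m) = -((m : ℤ) + 1) := rfl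
      rw [this]; exact hN m
  have htop : (⨆ n, A.grading n) = ⊤ := A.isInternal.submodule_iSup_eq_top
  have hStop : (⊤ : Submodule k L) ≤ S := htop ▸ iSup_le hall
  intro z ω
  exact (hmemS z).mp (hStop Submodule.mem_top) ω
end
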